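/- arXiv:1403.7387 — 7 statements merged into one kernel-verified Lean document; each statement's English description precedes it below -/
import Mathlib

section
/- Let (Ω,F,P) be a probability space and σ : [0,∞) × Ω → [0,∞) a jointly measurable process such that: for every s ≥ 0 the law of σ_s equals the law of σ_0; E[σ_0²] < +∞; (1/h)∫_0^h (σ_s − σ_0)² ds → 0 in probability as h → 0⁺; and for each h > 0 the map ω ↦ sup_{0 ≤ t ≤ h} σ_t(ω) is measurable. Define A(q) := limsup_{h→0⁺} (log E[(∫_0^h σ_s² ds)^{q/2}]) / (log h). If the set {q ≥ 1 : −∞ < A(q) < q/2} has nonempty interior, then there exist h > 0 and p ≥ 2 such that E[σ_0^p] < +∞ but E[(sup_{0 ≤ t ≤ h} σ_t)^p] = +∞. -/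
/-!
Write `S_h = sup_{[0,h]} σ` and `K_q(h) = E[(∫₀ʰ σ²)^{q/2}]`. Since `∫₀ʰ σ² ≤ h S_1²` for `h ≤ 1`,
`K_q(h) ≤ h^{q/2} E[S_1^q]`, so `A(q) < q/2` forces `E[S_1^q] = ∞`. Hence if `E[σ₀^{q₀}] < ∞` for
some `q₀` in the multi-scaling interval, `p = max q₀ 2` and `h = 1` work.

Otherwise let `s` be the supremum of the orders `≥ 2` of the finite moments of `σ₀` and take
`q > q₀ ≥ s` in the interval. As `A(q) > -∞`, `K_q(h) < ∞` for some `h > 0`. The time `λ_M` that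
`σ` spends above `M` during `(0, h]` has mean `h P(σ₀ > M)` by stationarity, satisfies
`M² λ_M ≤ ∫₀ʰ σ²`, and vanishes unless `S_h ≥ M`; Hölder's inequality then gives
`h P(σ₀ > M) ≤ M⁻² K_q(h)^{2/q} P(S_h ≥ M)^{1 - 2/q}`. Moments of `σ₀` beyond `s` are infinite,
so `P(σ₀ > M) ≥ M^{-u}` for arbitrarily large `M` and any `u > s`. With Chebyshev's inequality
for `S_h^p` this is incompatible with `E[S_h^p] < ∞` as soon as `p (1 - 2/q) > u - 2`; because
`s < q`, some `p ≥ 2` close enough to `s` with `E[σ₀^p] < ∞` and some `u > s` achieve this.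
-/

open Filter MeasureTheory Set

open scoped ENNReal Topology

lemma coe_le_log_div_log_of_le_ofReal_rpow {x : ℝ≥0∞} {h c : ℝ} (h0 : 0 < h) (h1 : h < 1)
    (hx : x ≤ ENNReal.ofReal (h ^ c)) :
    (c : EReal) ≤ ENNReal.log x / (Real.log h : EReal) := by
  have hlog : Real.log h < 0 := Real.log_neg h0 h1
  calc (c : EReal) = ((c * Real.log h : ℝ) : EReal) / (Real.log h : EReal) := by
        rw [← EReal.coe_div, mul_div_cancel_right₀ _ hlog.ne]
    _ ≤ ENNReal.log x / (Real.log h : EReal) := by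
        refine EReal.div_le_div_right_of_nonpos (EReal.coe_nonpos.2 hlog.le) ?_
        calc ENNReal.log x ≤ ENNReal.log (ENNReal.ofReal (h ^ c)) := ENNReal.log_le_log hx
          _ = ((c * Real.log h : ℝ) : EReal) := by
            rw [ENNReal.log_ofReal_of_pos (Real.rpow_pos_of_pos h0 c), Real.log_rpow h0]

lemma le_limsup_log_div_log_of_le_rpow_mul {f : ℝ → ℝ≥0∞} {a : ℝ} {D : ℝ≥0∞} (hD : D ≠ ⊤)
    (hf : ∀ᶠ h in 𝓝[>] 0, f h ≤ ENNReal.ofReal h ^ a * D) :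
    (a : EReal) ≤ limsup (fun h => ENNReal.log (f h) / (Real.log h : EReal)) (𝓝[>] 0) := by
  refine le_of_forall_lt_imp_le_of_dense fun c hc => ?_
  induction c using EReal.rec with
  | bot => exact bot_le
  | top => exact absurd hc not_top_lt
  | coe c =>
    have hca : c < a := EReal.coe_lt_coe_iff.1 hc
    have hlarge : ∀ᶠ h in 𝓝[>] (0 : ℝ), D.toReal + 1 ≤ h ^ (c - a) :=
      (tendsto_rpow_neg_nhdsGT_zero (by linarith)).eventually_ge_atTop _
    refine le_limsup_of_frequently_le (Eventually.frequently ?_)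
    filter_upwards [hf, hlarge, Ioo_mem_nhdsGT one_pos] with h hfh hh ⟨h0, h1⟩
    refine coe_le_log_div_log_of_le_ofReal_rpow h0 h1 ?_
    calc f h ≤ ENNReal.ofReal h ^ a * D := hfh
      _ ≤ ENNReal.ofReal (h ^ a) * ENNReal.ofReal (h ^ (c - a)) := by
          rw [ENNReal.ofReal_rpow_of_pos h0, ← ENNReal.ofReal_toReal hD]
          gcongr
          linarith
      _ = ENNReal.ofReal (h ^ c) := by
          rw [← ENNReal.ofReal_mul (Real.rpow_nonneg h0.le _), ← Real.rpow_add h0, add_sub_cancel]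

lemma exists_ne_top_of_bot_lt_limsup_log_div_log {f : ℝ → ℝ≥0∞}
    (hf : ⊥ < limsup (fun h => ENNReal.log (f h) / (Real.log h : EReal)) (𝓝[>] 0)) :
    ∃ h, 0 < h ∧ f h ≠ ⊤ := by
  by_contra! htop
  have hbot : ∀ᶠ h in 𝓝[>] (0 : ℝ), ENNReal.log (f h) / (Real.log h : EReal) = ⊥ := by
    filter_upwards [Ioo_mem_nhdsGT one_pos] with h ⟨h0, h1⟩
    rw [htop h h0, ENNReal.log_top,
      EReal.top_div_of_neg_ne_bot (EReal.coe_neg'.2 (Real.log_neg h0 h1)) (EReal.coe_ne_bot _)]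
  rw [limsup_congr hbot, limsup_const] at hf
  exact hf.false

lemma ENNReal.tendsto_const_mul_ofReal_rpow_atTop {C : ℝ≥0∞} (hC : C ≠ ⊤) {e : ℝ}
    (he : e < 0) : Tendsto (fun x : ℝ => C * ENNReal.ofReal x ^ e) atTop (𝓝 0) := by
  have hpow : Tendsto (fun x : ℝ => ENNReal.ofReal x ^ e) atTop (𝓝 0) := by
    refine (ENNReal.ofReal_zero ▸ ENNReal.tendsto_ofReal
      (by simpa using tendsto_rpow_neg_atTop (neg_pos.2 he))).congr' ?_
    filter_upwards [eventually_gt_atTop 0] with x hx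
    exact (ENNReal.ofReal_rpow_of_pos hx).symm
  simpa using ENNReal.Tendsto.const_mul hpow (Or.inr hC)

lemma ENNReal.rpow_le_one_add_rpow {x : ℝ≥0∞} {a b : ℝ} (ha : 0 ≤ a) (hab : a ≤ b) :
    x ^ a ≤ 1 + x ^ b := by
  rcases le_or_gt x 1 with hx | hx
  · exact (ENNReal.rpow_le_one hx ha).trans le_self_add
  · exact (ENNReal.rpow_le_rpow_of_exponent_le hx.le hab).trans le_add_self

section Moments

variable {α : Type*} [MeasurableSpace α] {μ : Measure α}

lemma lintegral_rpow_lt_top_of_le [IsFiniteMeasure μ] {f : α → ℝ≥0∞} {a b : ℝ}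
    (ha : 0 ≤ a) (hab : a ≤ b) (hf : ∫⁻ x, f x ^ b ∂μ < ⊤) : ∫⁻ x, f x ^ a ∂μ < ⊤ :=
  calc ∫⁻ x, f x ^ a ∂μ ≤ ∫⁻ x, (1 + f x ^ b) ∂μ :=
        lintegral_mono fun _ => ENNReal.rpow_le_one_add_rpow ha hab
    _ = μ univ + ∫⁻ x, f x ^ b ∂μ := by
        rw [lintegral_add_left measurable_const, lintegral_const, one_mul]
    _ < ⊤ := ENNReal.add_lt_top.2 ⟨measure_lt_top _ _, hf⟩

lemma lintegral_ofReal_rpow {X : α → ℝ} (hX : 0 ≤ᵐ[μ] X) {p : ℝ} (hp : 0 ≤ p) :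
    ∫⁻ x, ENNReal.ofReal (X x ^ p) ∂μ = ∫⁻ x, ENNReal.ofReal (X x) ^ p ∂μ := by
  refine lintegral_congr_ae ?_
  filter_upwards [hX] with x hx
  exact (ENNReal.ofReal_rpow_of_nonneg hx hp).symm

lemma lintegral_ofReal_rpow_lt_top_of_le [IsFiniteMeasure μ] {X : α → ℝ} (hX : 0 ≤ᵐ[μ] X)
    {a b : ℝ} (ha : 0 ≤ a) (hab : a ≤ b) (hb : ∫⁻ x, ENNReal.ofReal (X x ^ b) ∂μ < ⊤) :
    ∫⁻ x, ENNReal.ofReal (X x ^ a) ∂μ < ⊤ := by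
  rw [lintegral_ofReal_rpow hX (ha.trans hab)] at hb
  rw [lintegral_ofReal_rpow hX ha]
  exact lintegral_rpow_lt_top_of_le ha hab hb

lemma measure_le_rpow_neg_mul_lintegral_rpow {f : α → ℝ≥0∞} (hf : AEMeasurable f μ)
    {x : ℝ≥0∞} (hx0 : x ≠ 0) (hxt : x ≠ ⊤) {p : ℝ} (hp : 0 ≤ p) :
    μ {ω | x ≤ f ω} ≤ x ^ (-p) * ∫⁻ ω, f ω ^ p ∂μ := by
  rw [ENNReal.rpow_neg, ← ENNReal.mul_le_iff_le_inv
    (ENNReal.rpow_pos (pos_iff_ne_zero.2 hx0) hxt).ne' (ENNReal.rpow_ne_top_of_nonneg hp hxt)]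
  calc x ^ p * μ {ω | x ≤ f ω} ≤ x ^ p * μ {ω | x ^ p ≤ f ω ^ p} :=
        mul_le_mul_right (measure_mono fun ω hω => ENNReal.rpow_le_rpow hω hp) _
    _ ≤ ∫⁻ ω, f ω ^ p ∂μ := mul_meas_ge_le_lintegral₀ (hf.pow_const p) _

lemma lintegral_le_lintegral_rpow_mul_measure_ne_zero {f : α → ℝ≥0∞} (hf : Measurable f)
    {p q : ℝ} (hpq : p.HolderConjugate q) :
    ∫⁻ x, f x ∂μ ≤ (∫⁻ x, f x ^ p ∂μ) ^ (1 / p) * μ {x | f x ≠ 0} ^ (1 / q) := by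
  set s := {x | f x ≠ 0}
  have hs : MeasurableSet s := (hf (measurableSet_singleton 0)).compl
  have hfs : f * s.indicator 1 = f := by
    ext x
    by_cases hx : f x = 0 <;> simp [s, hx]
  have hsq : ∫⁻ x, s.indicator 1 x ^ q ∂μ = μ s := by
    rw [← lintegral_indicator_one hs]
    refine lintegral_congr fun x => ?_
    by_cases hx : x ∈ s <;> simp [hx, ENNReal.zero_rpow_of_pos hpq.symm.pos]
  have := ENNReal.lintegral_mul_le_Lp_mul_Lq μ hpq hf.aemeasurable
    (measurable_one.indicator hs).aemeasurable
  rwa [hfs, hsq] at this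

lemma lintegral_ofReal_rpow_lt_top_of_tail_le [IsFiniteMeasure μ] {X : α → ℝ}
    (hX0 : 0 ≤ᵐ[μ] X) (hX : AEMeasurable X μ) {r u : ℝ} (hr : 0 < r) (hru : r < u)
    (htail : ∀ᶠ t in atTop, μ {x | t < X x} ≤ ENNReal.ofReal t ^ (-u)) :
    ∫⁻ x, ENNReal.ofReal (X x ^ r) ∂μ < ⊤ := by
  obtain ⟨T, hT⟩ := eventually_atTop.1 htail
  have hT1 : 0 < max T 1 := lt_max_of_lt_right one_pos
  rw [lintegral_rpow_eq_lintegral_meas_lt_mul μ hX0 hX hr, ← Ioc_union_Ioi_eq_Ioi hT1.le,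
    lintegral_union measurableSet_Ioi (Ioc_disjoint_Ioi le_rfl)]
  refine ENNReal.mul_lt_top ENNReal.ofReal_lt_top (ENNReal.add_lt_top.2 ⟨?_, ?_⟩)
  · calc ∫⁻ t in Ioc 0 (max T 1), μ {x | t < X x} * ENNReal.ofReal (t ^ (r - 1))
          ≤ ∫⁻ t in Ioc 0 (max T 1), μ univ * ENNReal.ofReal (t ^ (r - 1)) :=
            lintegral_mono fun t => mul_le_mul_left (measure_mono (subset_univ _)) _
      _ = μ univ * ∫⁻ t in Ioc 0 (max T 1), ENNReal.ofReal (t ^ (r - 1)) :=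
            lintegral_const_mul' _ _ (measure_ne_top _ _)
      _ < ⊤ := ENNReal.mul_lt_top (measure_lt_top _ _)
            (intervalIntegral.intervalIntegrable_rpow' (by linarith)).1.lintegral_lt_top
  · have hbound : ∀ t ∈ Ioi (max T 1),
        μ {x | t < X x} * ENNReal.ofReal (t ^ (r - 1)) ≤ ENNReal.ofReal (t ^ (r - 1 - u)) := by
      intro t ht
      have ht0 : 0 < t := hT1.trans ht
      calc μ {x | t < X x} * ENNReal.ofReal (t ^ (r - 1))
          ≤ ENNReal.ofReal t ^ (-u) * ENNReal.ofReal (t ^ (r - 1)) :=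
            mul_le_mul_left (hT t ((le_max_left T 1).trans ht.le)) _
        _ = ENNReal.ofReal (t ^ (r - 1 - u)) := by
            rw [ENNReal.ofReal_rpow_of_pos ht0, ← ENNReal.ofReal_mul (Real.rpow_nonneg ht0.le _),
              ← Real.rpow_add ht0]
            ring_nf
    exact (setLIntegral_mono' measurableSet_Ioi hbound).trans_lt
      (integrableOn_Ioi_rpow_of_lt (by linarith) hT1).lintegral_lt_top

lemma frequently_tail_ge_of_lintegral_ofReal_rpow_eq_top [IsFiniteMeasure μ] {X : α → ℝ}
    (hX0 : 0 ≤ᵐ[μ] X) (hX : AEMeasurable X μ) {r u : ℝ} (hr : 0 < r) (hru : r < u)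
    (htop : ∫⁻ x, ENNReal.ofReal (X x ^ r) ∂μ = ⊤) :
    ∃ᶠ t in atTop, ENNReal.ofReal t ^ (-u) ≤ μ {x | t < X x} := by
  by_contra h
  rw [not_frequently] at h
  exact (lintegral_ofReal_rpow_lt_top_of_tail_le hX0 hX hr hru
    (h.mono fun _ ht => (not_le.1 ht).le)).ne htop

lemma exists_lintegral_ofReal_rpow_lt_top_and_frequently_tail_ge [IsFiniteMeasure μ]
    {X : α → ℝ} (hX0 : 0 ≤ᵐ[μ] X) (hX : AEMeasurable X μ)
    (h2 : ∫⁻ x, ENNReal.ofReal (X x ^ (2 : ℝ)) ∂μ < ⊤) {r q : ℝ} (hr0 : 0 ≤ r)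
    (hr : ∫⁻ x, ENNReal.ofReal (X x ^ r) ∂μ = ⊤) (hrq : r < q) :
    ∃ p, 2 ≤ p ∧ ∫⁻ x, ENNReal.ofReal (X x ^ p) ∂μ < ⊤ ∧
      ∃ u, u < 2 + p * ((q - 2) / q) ∧
        ∃ᶠ t in atTop, ENNReal.ofReal t ^ (-u) ≤ μ {x | t < X x} := by
  set T := {p : ℝ | 2 ≤ p ∧ ∫⁻ x, ENNReal.ofReal (X x ^ p) ∂μ < ⊤}
  have hTr : ∀ p ∈ T, p < r := fun p hp =>
    lt_of_not_ge fun hrp => (lintegral_ofReal_rpow_lt_top_of_le hX0 hr0 hrp hp.2).ne hr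
  have h2T : (2 : ℝ) ∈ T := ⟨le_rfl, h2⟩
  have hTbdd : BddAbove T := ⟨r, fun p hp => (hTr p hp).le⟩
  set s := sSup T
  have hs2 : 2 ≤ s := le_csSup hTbdd h2T
  have hsq : s < q := (csSup_le ⟨2, h2T⟩ fun p hp => (hTr p hp).le).trans_lt hrq
  set θ := (q - 2) / q with hθ_def
  have hθ : 0 < θ := div_pos (by linarith) (by linarith)
  have hsθ : (s - 2) / θ < s := by
    rw [div_lt_iff₀ hθ, hθ_def, mul_div_assoc', lt_div_iff₀ (by linarith)]
    nlinarith
  obtain ⟨p, hpT, hp⟩ := exists_lt_of_lt_csSup ⟨2, h2T⟩ hsθ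
  obtain ⟨u, hsu, hu⟩ : ∃ u, s < u ∧ u < 2 + p * θ :=
    exists_between (by linarith [(div_lt_iff₀ hθ).1 hp])
  refine ⟨p, hpT.1, hpT.2, u, hu, frequently_tail_ge_of_lintegral_ofReal_rpow_eq_top hX0 hX
    (r := (s + u) / 2) (by linarith) (by linarith) ?_⟩
  by_contra hfin
  have hmem : (s + u) / 2 ∈ T := ⟨by linarith, lt_top_iff_ne_top.2 hfin⟩
  linarith [le_csSup hTbdd hmem]

end Moments

namespace Multiscaling

variable {Ω : Type*} {σ : ℝ → Ω → ℝ}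

noncomputable def integratedVariance (σ : ℝ → Ω → ℝ) (h : ℝ) (ω : Ω) : ℝ :=
  ∫ s in Ioc 0 h, σ s ω ^ 2

noncomputable def runningSup (σ : ℝ → Ω → ℝ) (h : ℝ) (ω : Ω) : ℝ≥0∞ :=
  ⨆ t ∈ Icc 0 h, ENNReal.ofReal (σ t ω)

noncomputable def occupationTime (σ : ℝ → Ω → ℝ) (h M : ℝ) (ω : Ω) : ℝ≥0∞ :=
  volume.restrict (Ioc 0 h) {s | M < σ s ω}

lemma integratedVariance_nonneg (σ : ℝ → Ω → ℝ) (h : ℝ) (ω : Ω) :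
    0 ≤ integratedVariance σ h ω :=
  integral_nonneg fun _ => sq_nonneg _

lemma ofReal_le_runningSup {h t : ℝ} (ω : Ω) (ht : t ∈ Icc 0 h) :
    ENNReal.ofReal (σ t ω) ≤ runningSup σ h ω :=
  le_biSup (fun t => ENNReal.ofReal (σ t ω)) ht

lemma ofReal_le_runningSup_of_occupationTime_ne_zero {h M : ℝ} {ω : Ω}
    (hocc : occupationTime σ h M ω ≠ 0) : ENNReal.ofReal M ≤ runningSup σ h ω := by
  contrapose! hocc
  have hempty : {s | M < σ s ω} ∩ Ioc 0 h = ∅ := eq_empty_of_forall_notMem fun s ⟨hs, hsI⟩ =>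
    (((ENNReal.ofReal_le_ofReal hs.le).trans
      (ofReal_le_runningSup ω ⟨hsI.1.le, hsI.2⟩)).trans_lt hocc).false
  rw [occupationTime, Measure.restrict_apply' measurableSet_Ioc, hempty, measure_empty]

lemma ofReal_integratedVariance_le (hnonneg : ∀ s ω, 0 ≤ σ s ω) {h h₁ : ℝ} (hh : h ≤ h₁)
    (ω : Ω) :
    ENNReal.ofReal (integratedVariance σ h ω) ≤ ENNReal.ofReal h * runningSup σ h₁ ω ^ 2 := by
  have hsup : ∀ s ∈ Ioc 0 h, ENNReal.ofReal (σ s ω ^ 2) ≤ runningSup σ h₁ ω ^ 2 :=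
    fun s hs => by
      rw [ENNReal.ofReal_pow (hnonneg s ω)]
      exact pow_le_pow_left' (ofReal_le_runningSup ω ⟨hs.1.le, hs.2.trans hh⟩) 2
  calc ENNReal.ofReal (integratedVariance σ h ω)
      = ‖integratedVariance σ h ω‖ₑ :=
        (Real.enorm_of_nonneg (integratedVariance_nonneg σ h ω)).symm
    _ ≤ ∫⁻ s in Ioc 0 h, ‖σ s ω ^ 2‖ₑ := enorm_integral_le_lintegral_enorm _
    _ = ∫⁻ s in Ioc 0 h, ENNReal.ofReal (σ s ω ^ 2) := by
        simp_rw [Real.enorm_of_nonneg (sq_nonneg _)]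
    _ ≤ ∫⁻ _ in Ioc 0 h, runningSup σ h₁ ω ^ 2 := setLIntegral_mono' measurableSet_Ioc hsup
    _ = ENNReal.ofReal h * runningSup σ h₁ ω ^ 2 := by
        rw [setLIntegral_const, Real.volume_Ioc, sub_zero, mul_comm]

variable [MeasurableSpace Ω] {P : Measure Ω}

noncomputable def scalingMoment (P : Measure Ω) (σ : ℝ → Ω → ℝ) (q h : ℝ) : ℝ≥0∞ :=
  ∫⁻ ω, ENNReal.ofReal (integratedVariance σ h ω ^ (q / 2)) ∂P

noncomputable def scalingExponent (P : Measure Ω) (σ : ℝ → Ω → ℝ) (q : ℝ) : EReal :=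
  limsup (fun h => ENNReal.log (scalingMoment P σ q h) / (Real.log h : EReal)) (𝓝[>] 0)

lemma scalingMoment_le (hnonneg : ∀ s ω, 0 ≤ σ s ω) {q h h₁ : ℝ} (hq : 0 ≤ q) (hh : h ≤ h₁) :
    scalingMoment P σ q h ≤ ENNReal.ofReal h ^ (q / 2) * ∫⁻ ω, runningSup σ h₁ ω ^ q ∂P := by
  rw [scalingMoment, ← lintegral_const_mul' _ _
    (ENNReal.rpow_ne_top_of_nonneg (by positivity) ENNReal.ofReal_ne_top)]
  refine lintegral_mono fun ω => ?_
  calc ENNReal.ofReal (integratedVariance σ h ω ^ (q / 2))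
      = ENNReal.ofReal (integratedVariance σ h ω) ^ (q / 2) :=
        (ENNReal.ofReal_rpow_of_nonneg (integratedVariance_nonneg σ h ω) (by positivity)).symm
    _ ≤ (ENNReal.ofReal h * runningSup σ h₁ ω ^ 2) ^ (q / 2) :=
        ENNReal.rpow_le_rpow (ofReal_integratedVariance_le hnonneg hh ω) (by positivity)
    _ = ENNReal.ofReal h ^ (q / 2) * runningSup σ h₁ ω ^ q := by
        rw [ENNReal.mul_rpow_of_nonneg _ _ (by positivity), ← ENNReal.rpow_natCast,
          ← ENNReal.rpow_mul, Nat.cast_ofNat, mul_div_cancel₀ q two_ne_zero]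

lemma lintegral_runningSup_rpow_eq_top (hnonneg : ∀ s ω, 0 ≤ σ s ω) {q h₁ : ℝ} (hq : 0 ≤ q)
    (hh₁ : 0 < h₁) (hA : scalingExponent P σ q < ((q / 2 : ℝ) : EReal)) :
    ∫⁻ ω, runningSup σ h₁ ω ^ q ∂P = ⊤ := by
  by_contra hfin
  refine hA.not_ge (le_limsup_log_div_log_of_le_rpow_mul hfin ?_)
  filter_upwards [Ioo_mem_nhdsGT hh₁] with h hh
  exact scalingMoment_le hnonneg hq hh.2.le

lemma identDistrib_of_map_eq (hmeas : Measurable (Function.uncurry σ))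
    (hstat : ∀ s, 0 ≤ s → P.map (σ s) = P.map (σ 0)) {s : ℝ} (hs : 0 ≤ s) :
    ProbabilityTheory.IdentDistrib (σ s) (σ 0) P P :=
  ⟨(hmeas.comp measurable_prodMk_left).aemeasurable,
    (hmeas.comp measurable_prodMk_left).aemeasurable, hstat s hs⟩

lemma lintegral_lintegral_sq_eq [SFinite P] (hmeas : Measurable (Function.uncurry σ))
    (hstat : ∀ s, 0 ≤ s → P.map (σ s) = P.map (σ 0)) (h : ℝ) :
    ∫⁻ ω, (∫⁻ s in Ioc 0 h, ENNReal.ofReal (σ s ω ^ 2)) ∂P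
      = ENNReal.ofReal h * ∫⁻ ω, ENNReal.ofReal (σ 0 ω ^ 2) ∂P := by
  have hsq : Measurable fun p : Ω × ℝ => ENNReal.ofReal (σ p.2 p.1 ^ 2) :=
    ((hmeas.comp measurable_swap).pow_const 2).ennreal_ofReal
  have hstat_sq : ∀ s ∈ Ioc (0 : ℝ) h,
      ∫⁻ ω, ENNReal.ofReal (σ s ω ^ 2) ∂P = ∫⁻ ω, ENNReal.ofReal (σ 0 ω ^ 2) ∂P :=
    fun s hs => ((identDistrib_of_map_eq hmeas hstat hs.1.le).comp
      (measurable_id.pow_const 2).ennreal_ofReal).lintegral_eq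
  rw [lintegral_lintegral_swap hsq.aemeasurable,
    setLIntegral_congr_fun measurableSet_Ioc hstat_sq, setLIntegral_const, Real.volume_Ioc,
    sub_zero, mul_comm]

lemma ae_integrableOn_sq [SFinite P] (hmeas : Measurable (Function.uncurry σ))
    (hstat : ∀ s, 0 ≤ s → P.map (σ s) = P.map (σ 0))
    (hL2 : ∫⁻ ω, ENNReal.ofReal (σ 0 ω ^ 2) ∂P < ⊤) (h : ℝ) :
    ∀ᵐ ω ∂P, IntegrableOn (fun s => σ s ω ^ 2) (Ioc 0 h) := by
  have hfin : ∫⁻ ω, (∫⁻ s in Ioc 0 h, ENNReal.ofReal (σ s ω ^ 2)) ∂P ≠ ⊤ := by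
    rw [lintegral_lintegral_sq_eq hmeas hstat h]
    exact ENNReal.mul_ne_top ENNReal.ofReal_ne_top hL2.ne
  filter_upwards [ae_lt_top (Measurable.lintegral_prod_right'
    ((hmeas.comp measurable_swap).pow_const 2).ennreal_ofReal) hfin] with ω hω
  refine ⟨((hmeas.comp measurable_prodMk_right).pow_const 2).aestronglyMeasurable, ?_⟩
  rwa [hasFiniteIntegral_iff_ofReal (ae_of_all _ fun s => sq_nonneg _)]

lemma measurableSet_lt_process (hmeas : Measurable (Function.uncurry σ)) (M : ℝ) :
    MeasurableSet {p : Ω × ℝ | M < σ p.2 p.1} :=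
  measurableSet_lt measurable_const (hmeas.comp measurable_swap)

lemma measurable_occupationTime (hmeas : Measurable (Function.uncurry σ)) (h M : ℝ) :
    Measurable (occupationTime σ h M) :=
  measurable_measure_prodMk_left (measurableSet_lt_process hmeas M)

lemma lintegral_occupationTime [SFinite P] (hmeas : Measurable (Function.uncurry σ))
    (hstat : ∀ s, 0 ≤ s → P.map (σ s) = P.map (σ 0)) (h M : ℝ) :
    ∫⁻ ω, occupationTime σ h M ω ∂P = ENNReal.ofReal h * P {ω | M < σ 0 ω} := by
  have htail : ∀ s ∈ Ioc (0 : ℝ) h,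
      P ((fun ω => (ω, s)) ⁻¹' {p : Ω × ℝ | M < σ p.2 p.1}) = P {ω | M < σ 0 ω} :=
    fun s hs => (identDistrib_of_map_eq hmeas hstat hs.1.le).measure_mem_eq measurableSet_Ioi
  calc ∫⁻ ω, occupationTime σ h M ω ∂P
      = (P.prod (volume.restrict (Ioc 0 h))) {p : Ω × ℝ | M < σ p.2 p.1} :=
        (Measure.prod_apply (measurableSet_lt_process hmeas M)).symm
    _ = ENNReal.ofReal h * P {ω | M < σ 0 ω} := by
        rw [Measure.prod_apply_symm (measurableSet_lt_process hmeas M),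
          setLIntegral_congr_fun measurableSet_Ioc htail, setLIntegral_const, Real.volume_Ioc,
          sub_zero, mul_comm]

lemma occupationTime_le (hmeas : Measurable (Function.uncurry σ)) (hnonneg : ∀ s ω, 0 ≤ σ s ω)
    {h M : ℝ} (hM : 0 < M) {ω : Ω} (hint : IntegrableOn (fun s => σ s ω ^ 2) (Ioc 0 h)) :
    occupationTime σ h M ω ≤
      ENNReal.ofReal M ^ (-2 : ℝ) * ENNReal.ofReal (integratedVariance σ h ω) := by
  calc occupationTime σ h M ω
      ≤ volume.restrict (Ioc 0 h) {s | ENNReal.ofReal M ≤ ENNReal.ofReal (σ s ω)} :=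
        measure_mono fun s hs => ENNReal.ofReal_le_ofReal (le_of_lt hs)
    _ ≤ ENNReal.ofReal M ^ (-2 : ℝ) * ∫⁻ s in Ioc 0 h, ENNReal.ofReal (σ s ω) ^ (2 : ℝ) :=
        measure_le_rpow_neg_mul_lintegral_rpow
          (hmeas.comp measurable_prodMk_right).ennreal_ofReal.aemeasurable
          (ENNReal.ofReal_pos.2 hM).ne' ENNReal.ofReal_ne_top zero_le_two
    _ = ENNReal.ofReal M ^ (-2 : ℝ) * ENNReal.ofReal (integratedVariance σ h ω) := by
        rw [← lintegral_ofReal_rpow (ae_of_all _ fun s => hnonneg s ω) zero_le_two,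
          integratedVariance,
          ofReal_integral_eq_lintegral_ofReal hint (ae_of_all _ fun s => sq_nonneg _)]
        simp_rw [Real.rpow_two]

lemma lintegral_occupationTime_rpow_le [SFinite P] (hmeas : Measurable (Function.uncurry σ))
    (hnonneg : ∀ s ω, 0 ≤ σ s ω) (hstat : ∀ s, 0 ≤ s → P.map (σ s) = P.map (σ 0))
    (hL2 : ∫⁻ ω, ENNReal.ofReal (σ 0 ω ^ 2) ∂P < ⊤) {q h M : ℝ} (hq : 0 ≤ q) (hM : 0 < M) :
    ∫⁻ ω, occupationTime σ h M ω ^ (q / 2) ∂P ≤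
      ENNReal.ofReal M ^ (-q) * scalingMoment P σ q h := by
  rw [scalingMoment, ← lintegral_const_mul' _ _
    (ENNReal.rpow_ne_top_of_nonneg' (ENNReal.ofReal_pos.2 hM) ENNReal.ofReal_ne_top)]
  refine lintegral_mono_ae ?_
  filter_upwards [ae_integrableOn_sq hmeas hstat hL2 h] with ω hω
  calc occupationTime σ h M ω ^ (q / 2)
      ≤ (ENNReal.ofReal M ^ (-2 : ℝ) * ENNReal.ofReal (integratedVariance σ h ω)) ^ (q / 2) :=
        ENNReal.rpow_le_rpow (occupationTime_le hmeas hnonneg hM hω) (by positivity)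
    _ = ENNReal.ofReal M ^ (-q) * ENNReal.ofReal (integratedVariance σ h ω ^ (q / 2)) := by
        rw [ENNReal.mul_rpow_of_nonneg _ _ (by positivity), ← ENNReal.rpow_mul,
          ENNReal.ofReal_rpow_of_nonneg (integratedVariance_nonneg σ h ω) (by positivity)]
        ring_nf

lemma ofReal_mul_measure_lt_le_measure_runningSup [SFinite P]
    (hmeas : Measurable (Function.uncurry σ)) (hnonneg : ∀ s ω, 0 ≤ σ s ω)
    (hstat : ∀ s, 0 ≤ s → P.map (σ s) = P.map (σ 0))
    (hL2 : ∫⁻ ω, ENNReal.ofReal (σ 0 ω ^ 2) ∂P < ⊤) {q h M : ℝ} (hq : 2 < q) (hM : 0 < M) :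
    ENNReal.ofReal h * P {ω | M < σ 0 ω} ≤
      ENNReal.ofReal M ^ (-2 : ℝ) * scalingMoment P σ q h ^ (2 / q) *
        P {ω | ENNReal.ofReal M ≤ runningSup σ h ω} ^ ((q - 2) / q) := by
  have hpq : (q / 2).HolderConjugate (q / (q - 2)) :=
    Real.holderConjugate_iff.2 ⟨by linarith, by field_simp; ring⟩
  calc ENNReal.ofReal h * P {ω | M < σ 0 ω}
      = ∫⁻ ω, occupationTime σ h M ω ∂P := (lintegral_occupationTime hmeas hstat h M).symm
    _ ≤ (∫⁻ ω, occupationTime σ h M ω ^ (q / 2) ∂P) ^ (1 / (q / 2)) *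
          P {ω | occupationTime σ h M ω ≠ 0} ^ (1 / (q / (q - 2))) :=
        lintegral_le_lintegral_rpow_mul_measure_ne_zero (measurable_occupationTime hmeas h M) hpq
    _ ≤ (ENNReal.ofReal M ^ (-q) * scalingMoment P σ q h) ^ (2 / q) *
          P {ω | ENNReal.ofReal M ≤ runningSup σ h ω} ^ ((q - 2) / q) := by
        rw [one_div_div, one_div_div]
        exact mul_le_mul'
          (ENNReal.rpow_le_rpow
            (lintegral_occupationTime_rpow_le hmeas hnonneg hstat hL2 (by linarith) hM)
            (by positivity))
          (ENNReal.rpow_le_rpow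
            (measure_mono fun _ => ofReal_le_runningSup_of_occupationTime_ne_zero)
            (div_nonneg (by linarith) (by linarith)))
    _ = _ := by
        rw [ENNReal.mul_rpow_of_nonneg _ _ (by positivity), ← ENNReal.rpow_mul,
          neg_mul, mul_div_cancel₀ _ (by linarith : q ≠ 0)]

lemma ofReal_mul_measure_lt_le_lintegral_runningSup [SFinite P]
    (hmeas : Measurable (Function.uncurry σ)) (hnonneg : ∀ s ω, 0 ≤ σ s ω)
    (hstat : ∀ s, 0 ≤ s → P.map (σ s) = P.map (σ 0))
    (hL2 : ∫⁻ ω, ENNReal.ofReal (σ 0 ω ^ 2) ∂P < ⊤) {q h p M : ℝ} (hq : 2 < q)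
    (hS : Measurable (runningSup σ h)) (hp : 0 ≤ p) (hM : 0 < M) :
    ENNReal.ofReal h * P {ω | M < σ 0 ω} ≤
      scalingMoment P σ q h ^ (2 / q) * (∫⁻ ω, runningSup σ h ω ^ p ∂P) ^ ((q - 2) / q) *
        ENNReal.ofReal M ^ (-2 - p * ((q - 2) / q)) := by
  have hθ : 0 ≤ (q - 2) / q := div_nonneg (by linarith) (by linarith)
  have hM0 : ENNReal.ofReal M ≠ 0 := (ENNReal.ofReal_pos.2 hM).ne'
  calc ENNReal.ofReal h * P {ω | M < σ 0 ω}
      ≤ ENNReal.ofReal M ^ (-2 : ℝ) * scalingMoment P σ q h ^ (2 / q) *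
          P {ω | ENNReal.ofReal M ≤ runningSup σ h ω} ^ ((q - 2) / q) :=
        ofReal_mul_measure_lt_le_measure_runningSup hmeas hnonneg hstat hL2 hq hM
    _ ≤ ENNReal.ofReal M ^ (-2 : ℝ) * scalingMoment P σ q h ^ (2 / q) *
          (ENNReal.ofReal M ^ (-p) * ∫⁻ ω, runningSup σ h ω ^ p ∂P) ^ ((q - 2) / q) := by
        gcongr
        exact measure_le_rpow_neg_mul_lintegral_rpow hS.aemeasurable hM0 ENNReal.ofReal_ne_top hp
    _ = _ := by
        rw [ENNReal.mul_rpow_of_nonneg _ _ hθ, ← ENNReal.rpow_mul, sub_eq_add_neg (-2 : ℝ),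
          ENNReal.rpow_add _ _ hM0 ENNReal.ofReal_ne_top, neg_mul]
        ring

lemma lintegral_runningSup_rpow_eq_top_of_frequently [SFinite P]
    (hmeas : Measurable (Function.uncurry σ)) (hnonneg : ∀ s ω, 0 ≤ σ s ω)
    (hstat : ∀ s, 0 ≤ s → P.map (σ s) = P.map (σ 0))
    (hL2 : ∫⁻ ω, ENNReal.ofReal (σ 0 ω ^ 2) ∂P < ⊤) {q h p u : ℝ} (hq : 2 < q) (hh : 0 < h)
    (hS : Measurable (runningSup σ h)) (hK : scalingMoment P σ q h ≠ ⊤) (hp : 0 ≤ p)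
    (hu : u < 2 + p * ((q - 2) / q))
    (htail : ∃ᶠ M in atTop, ENNReal.ofReal M ^ (-u) ≤ P {ω | M < σ 0 ω}) :
    ∫⁻ ω, runningSup σ h ω ^ p ∂P = ⊤ := by
  by_contra hV
  set θ := (q - 2) / q
  set C := scalingMoment P σ q h ^ (2 / q) * (∫⁻ ω, runningSup σ h ω ^ p ∂P) ^ θ
  have hC : C ≠ ⊤ := ENNReal.mul_ne_top (ENNReal.rpow_ne_top_of_nonneg (by positivity) hK)
    (ENNReal.rpow_ne_top_of_nonneg (div_nonneg (by linarith) (by linarith)) hV)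
  have hbound : ∀ M, 0 < M → ENNReal.ofReal M ^ (-u) ≤ P {ω | M < σ 0 ω} →
      ENNReal.ofReal h ≤ C * ENNReal.ofReal M ^ (u - 2 - p * θ) := fun M hM htM => by
    have hM0 : ENNReal.ofReal M ≠ 0 := (ENNReal.ofReal_pos.2 hM).ne'
    calc ENNReal.ofReal h
        = ENNReal.ofReal h * ENNReal.ofReal M ^ (-u) * ENNReal.ofReal M ^ u := by
          rw [mul_assoc, ← ENNReal.rpow_add _ _ hM0 ENNReal.ofReal_ne_top, neg_add_cancel,
            ENNReal.rpow_zero, mul_one]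
      _ ≤ ENNReal.ofReal h * P {ω | M < σ 0 ω} * ENNReal.ofReal M ^ u := by gcongr
      _ ≤ C * ENNReal.ofReal M ^ (-2 - p * θ) * ENNReal.ofReal M ^ u :=
          mul_le_mul_left (ofReal_mul_measure_lt_le_lintegral_runningSup hmeas hnonneg hstat hL2
            hq hS hp hM) _
      _ = C * ENNReal.ofReal M ^ (u - 2 - p * θ) := by
          rw [mul_assoc, ← ENNReal.rpow_add _ _ hM0 ENNReal.ofReal_ne_top]
          ring_nf
  have hsmall : ∀ᶠ M in atTop, C * ENNReal.ofReal M ^ (u - 2 - p * θ) < ENNReal.ofReal h :=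
    (ENNReal.tendsto_const_mul_ofReal_rpow_atTop hC (by linarith)).eventually_lt_const
      (ENNReal.ofReal_pos.2 hh)
  obtain ⟨M, htM, hlt, hM⟩ := (htail.and_eventually (hsmall.and (eventually_gt_atTop 0))).exists
  exact (hbound M hM htM).not_gt hlt

end Multiscaling

open Multiscaling in
theorem stmt_4_general {Ω : Type*} [MeasurableSpace Ω] (P : Measure Ω) [IsProbabilityMeasure P]
    (σ : ℝ → Ω → ℝ)
    (hmeas : Measurable (Function.uncurry σ))
    (hnonneg : ∀ s ω, 0 ≤ σ s ω)
    (hstat : ∀ s : ℝ, 0 ≤ s → Measure.map (σ s) P = Measure.map (σ 0) P)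
    (hL2 : ∫⁻ ω, ENNReal.ofReal ((σ 0 ω) ^ 2) ∂P < ⊤)
    (hsupmeas : ∀ h : ℝ, 0 < h →
      Measurable (fun ω => ⨆ t ∈ Set.Icc (0:ℝ) h, ENNReal.ofReal (σ t ω)))
    (A : ℝ → EReal)
    (hA : ∀ q : ℝ, A q = limsup
      (fun h => ENNReal.log
          (∫⁻ ω, ENNReal.ofReal ((∫ s in Set.Ioc (0:ℝ) h, (σ s ω) ^ 2) ^ (q / 2)) ∂P)
        / (Real.log h : EReal))
      (nhdsWithin 0 (Set.Ioi 0)))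
    (hms : (interior {q : ℝ | 1 ≤ q ∧ ⊥ < A q ∧ A q < ((q / 2 : ℝ) : EReal)}).Nonempty) :
    ∃ h : ℝ, 0 < h ∧ ∃ p : ℝ, 2 ≤ p ∧
      ∫⁻ ω, ENNReal.ofReal ((σ 0 ω) ^ p) ∂P < ⊤ ∧
      ∫⁻ ω, (⨆ t ∈ Set.Icc (0:ℝ) h, ENNReal.ofReal (σ t ω)) ^ p ∂P = ⊤ := by
  have hA' : ∀ q, A q = scalingExponent P σ q := hA
  have hL2' : ∫⁻ ω, ENNReal.ofReal (σ 0 ω ^ (2 : ℝ)) ∂P < ⊤ := by simpa only [Real.rpow_two]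
  have hσ₀ : 0 ≤ᵐ[P] σ 0 := ae_of_all _ (hnonneg 0)
  obtain ⟨q₀, hq₀⟩ := hms
  obtain ⟨δ, hδ, hball⟩ := Metric.isOpen_iff.1 isOpen_interior q₀ hq₀
  have hmem : ∀ q ∈ Metric.ball q₀ δ, 1 ≤ q ∧ ⊥ < scalingExponent P σ q ∧
      scalingExponent P σ q < ((q / 2 : ℝ) : EReal) := fun q hq => by
    simpa only [hA', mem_ofPred_eq] using interior_subset (hball hq)
  obtain ⟨hq₀1, -, hq₀A⟩ := hmem q₀ (Metric.mem_ball_self hδ)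
  have hsup : ∫⁻ ω, runningSup σ 1 ω ^ q₀ ∂P = ⊤ :=
    lintegral_runningSup_rpow_eq_top hnonneg (by linarith) one_pos hq₀A
  by_cases hfin : ∫⁻ ω, ENNReal.ofReal (σ 0 ω ^ q₀) ∂P < ⊤
  · rcases le_or_gt 2 q₀ with hq₀2 | hq₀2
    · exact ⟨1, one_pos, q₀, hq₀2, hfin, hsup⟩
    · refine ⟨1, one_pos, 2, le_rfl, hL2', ?_⟩
      by_contra h2
      exact (lintegral_rpow_lt_top_of_le (by linarith) hq₀2.le (lt_top_iff_ne_top.2 h2)).ne hsup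
  · obtain ⟨-, hqA, -⟩ := hmem (q₀ + δ / 2) (by
      rw [Metric.mem_ball, Real.dist_eq, add_sub_cancel_left, abs_of_pos (by linarith)]
      linarith)
    obtain ⟨h, hh, hK⟩ := exists_ne_top_of_bot_lt_limsup_log_div_log hqA
    have hq₀2 : 2 < q₀ := lt_of_not_ge fun h => hfin
      (lintegral_ofReal_rpow_lt_top_of_le hσ₀ (by linarith) h hL2')
    obtain ⟨p, hp2, hpfin, u, hu, htail⟩ :=
      exists_lintegral_ofReal_rpow_lt_top_and_frequently_tail_ge hσ₀
        (hmeas.comp measurable_prodMk_left).aemeasurable hL2' (by linarith)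
        (not_lt_top_iff.1 hfin) (by linarith : q₀ < q₀ + δ / 2)
    exact ⟨h, hh, p, hp2, hpfin, lintegral_runningSup_rpow_eq_top_of_frequently hmeas hnonneg
      hstat hL2 (by linarith) hh (hsupmeas h hh) hK (by linarith) hu htail⟩

/-- Corollary 2 (cor:diff2): a necessary condition for multi-scaling is the existence of
`h > 0` and `p ≥ 2` such that `E[σ₀^p] < ∞` but `E[(sup_{0 ≤ t ≤ h} σ_t)^p] = ∞`.
The running supremum is expressed in `ℝ≥0∞` to allow infinite values. -/
theorem stmt_4 {Ω : Type*} [MeasurableSpace Ω] (P : Measure Ω) [IsProbabilityMeasure P]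
    (σ : ℝ → Ω → ℝ)
    (hmeas : Measurable (Function.uncurry σ))
    (hnonneg : ∀ s ω, 0 ≤ σ s ω)
    (hstat : ∀ s : ℝ, 0 ≤ s → Measure.map (σ s) P = Measure.map (σ 0) P)
    (hL2 : ∫⁻ ω, ENNReal.ofReal ((σ 0 ω) ^ 2) ∂P < ⊤)
    (hcont : ∀ ε : ℝ, 0 < ε →
      Tendsto (fun h => P {ω | ε ≤ (1 / h) * ∫ s in Set.Ioc (0:ℝ) h, (σ s ω - σ 0 ω) ^ 2})
        (nhdsWithin 0 (Set.Ioi 0)) (nhds 0))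
    (hsupmeas : ∀ h : ℝ, 0 < h →
      Measurable (fun ω => ⨆ t ∈ Set.Icc (0:ℝ) h, ENNReal.ofReal (σ t ω)))
    (A : ℝ → EReal)
    (hA : ∀ q : ℝ, A q = limsup
      (fun h => ENNReal.log
          (∫⁻ ω, ENNReal.ofReal ((∫ s in Set.Ioc (0:ℝ) h, (σ s ω) ^ 2) ^ (q / 2)) ∂P)
        / (Real.log h : EReal))
      (nhdsWithin 0 (Set.Ioi 0)))
    (hms : (interior {q : ℝ | 1 ≤ q ∧ ⊥ < A q ∧ A q < ((q / 2 : ℝ) : EReal)}).Nonempty) :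
    ∃ h : ℝ, 0 < h ∧ ∃ p : ℝ, 2 ≤ p ∧
      ∫⁻ ω, ENNReal.ofReal ((σ 0 ω) ^ p) ∂P < ⊤ ∧
      ∫⁻ ω, (⨆ t ∈ Set.Icc (0:ℝ) h, ENNReal.ofReal (σ t ω)) ^ p ∂P = ⊤ :=
  stmt_4_general P σ hmeas hnonneg hstat hL2 hsupmeas A hA hms
end

section
/- Let (Ω,F,P) be a probability space and let (F_h)_{0<h<1} be a family of nonnegative random variables such that: F_h(ω) ≤ F_{h'}(ω) whenever h ≤ h'; F_h → 0 almost surely as h → 0⁺; E[F_h^m] < +∞ for every m ≥ 1 and h ∈ (0,1); and E[F_h] > 0 for every h ∈ (0,1). Define A(q) := limsup_{h→0⁺} (log E[F_h^{q/2}]) / (log h). Then A is nondecreasing on [1,∞): for all 1 ≤ q < p, A(q) ≤ A(p). -/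
/-! By Hölder's inequality `s ↦ log E[F_h^s]` is convex: given `θ ∈ (0,1)`, choose `m` with
`p = θ q + (1 - θ) m`; then `log E[F_h^{p/2}] ≤ θ log E[F_h^{q/2}] + (1 - θ) log E[F_h^{m/2}]`.
Monotonicity in `h` gives the dominating function `F_{1/2}` on `h ≤ 1/2`, so
`E[F_h^{m/2}] → 0` by dominated convergence and its logarithm is eventually `≤ 0`. Dividing by
`log h < 0` yields `θ A(q) ≤ A(p)`, and letting `θ → 1` gives `A(q) ≤ A(p)`. -/

open Filter MeasureTheory Topology Set
open scoped ENNReal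

theorem ENNReal.rpow_le_one_add_rpow_s5 (x : ℝ≥0∞) {s t : ℝ} (hs : 0 ≤ s) (hst : s ≤ t) :
    x ^ s ≤ 1 + x ^ t := by
  rcases le_total x 1 with hx | hx
  · exact (ENNReal.rpow_le_one hx hs).trans le_self_add
  · exact (ENNReal.rpow_le_rpow_of_exponent_le hx hst).trans le_add_self

theorem EReal.le_of_forall_lt_one_mul_le {x y : EReal}
    (h : ∀ θ : ℝ, 0 < θ → θ < 1 → (θ : EReal) * x ≤ y) : x ≤ y := by
  have hmul : ContinuousAt (fun p : EReal × EReal => p.1 * p.2) (1, x) :=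
    EReal.continuousAt_mul (.inl one_ne_zero) (.inl one_ne_zero) (.inl (EReal.coe_ne_bot 1))
      (.inl (EReal.coe_ne_top 1))
  have hcont : Tendsto (fun θ : ℝ => (θ : EReal) * x) (𝓝[<] 1) (𝓝 x) := by
    simpa [Function.comp_def] using hmul.tendsto.comp
      (((continuous_coe_real_ereal.tendsto 1).mono_left nhdsWithin_le_nhds).prodMk_nhds
        tendsto_const_nhds)
  refine le_of_tendsto hcont ?_
  filter_upwards [Ioo_mem_nhdsLT zero_lt_one] with θ hθ using h θ hθ.1 hθ.2

theorem EReal.limsup_le_limsup_of_forall_lt_one_mul_le {α : Type*} {f : Filter α} [f.NeBot]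
    {u v : α → EReal} (h : ∀ θ : ℝ, 0 < θ → θ < 1 → ∀ᶠ x in f, (θ : EReal) * u x ≤ v x) :
    limsup u f ≤ limsup v f :=
  EReal.le_of_forall_lt_one_mul_le fun θ hθ₀ hθ₁ => by
    rw [← EReal.limsup_const_mul_of_nonneg_of_ne_top (by exact_mod_cast hθ₀.le)
      (EReal.coe_ne_top θ)]
    exact limsup_le_limsup (h θ hθ₀ hθ₁)

namespace MeasureTheory

variable {Ω : Type*} [MeasurableSpace Ω] {μ : Measure Ω}

theorem lintegral_ofReal_rpow {f : Ω → ℝ} (hf : ∀ ω, 0 ≤ f ω) {s : ℝ} (hs : 0 ≤ s) :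
    ∫⁻ ω, ENNReal.ofReal (f ω ^ s) ∂μ = ∫⁻ ω, ENNReal.ofReal (f ω) ^ s ∂μ :=
  lintegral_congr fun ω => (ENNReal.ofReal_rpow_of_nonneg (hf ω) hs).symm

theorem lintegral_rpow_ne_top_of_le [IsFiniteMeasure μ] {g : Ω → ℝ≥0∞} {s t : ℝ}
    (hs : 0 ≤ s) (hst : s ≤ t) (ht : ∫⁻ ω, g ω ^ t ∂μ ≠ ∞) : ∫⁻ ω, g ω ^ s ∂μ ≠ ∞ := by
  refine ne_top_of_le_ne_top ?_ (lintegral_mono fun ω => (g ω).rpow_le_one_add_rpow_s5 hs hst)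
  simpa [lintegral_add_left measurable_const] using ht

theorem lintegral_rpow_interpolation_le {g : Ω → ℝ≥0∞} (hg : AEMeasurable g μ) {a b θ : ℝ}
    (ha : 0 ≤ a) (hb : 0 ≤ b) (hθ₀ : 0 ≤ θ) (hθ₁ : θ ≤ 1) :
    ∫⁻ ω, g ω ^ (θ * a + (1 - θ) * b) ∂μ
      ≤ (∫⁻ ω, g ω ^ a ∂μ) ^ θ * (∫⁻ ω, g ω ^ b ∂μ) ^ (1 - θ) := by
  have hsplit : ∀ ω, g ω ^ (θ * a + (1 - θ) * b) = (g ω ^ a) ^ θ * (g ω ^ b) ^ (1 - θ) :=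
    fun ω => by
      rw [ENNReal.rpow_add_of_nonneg _ _ (mul_nonneg hθ₀ ha) (mul_nonneg (by linarith) hb),
        mul_comm θ, mul_comm (1 - θ), ENNReal.rpow_mul, ENNReal.rpow_mul]
  simp_rw [hsplit]
  exact ENNReal.lintegral_mul_norm_pow_le (hg.pow_const a) (hg.pow_const b) hθ₀ (by linarith)
    (by ring)

theorem log_lintegral_rpow_interpolation_le {g : Ω → ℝ≥0∞} (hg : AEMeasurable g μ) {a b θ : ℝ}
    (ha : 0 ≤ a) (hb : 0 ≤ b) (hθ₀ : 0 ≤ θ) (hθ₁ : θ ≤ 1) (hb₁ : ∫⁻ ω, g ω ^ b ∂μ ≤ 1) :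
    ENNReal.log (∫⁻ ω, g ω ^ (θ * a + (1 - θ) * b) ∂μ)
      ≤ θ * ENNReal.log (∫⁻ ω, g ω ^ a ∂μ) := by
  have hlog_b : ((1 - θ : ℝ) : EReal) * ENNReal.log (∫⁻ ω, g ω ^ b ∂μ) ≤ 0 :=
    mul_nonpos_of_nonneg_of_nonpos (by exact_mod_cast sub_nonneg.2 hθ₁)
      (ENNReal.log_le_zero_iff.2 hb₁)
  calc ENNReal.log (∫⁻ ω, g ω ^ (θ * a + (1 - θ) * b) ∂μ)
      ≤ ENNReal.log ((∫⁻ ω, g ω ^ a ∂μ) ^ θ * (∫⁻ ω, g ω ^ b ∂μ) ^ (1 - θ)) :=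
        ENNReal.log_monotone (lintegral_rpow_interpolation_le hg ha hb hθ₀ hθ₁)
    _ = θ * ENNReal.log (∫⁻ ω, g ω ^ a ∂μ)
          + ((1 - θ : ℝ) : EReal) * ENNReal.log (∫⁻ ω, g ω ^ b ∂μ) := by
        rw [ENNReal.log_mul_add, ENNReal.log_rpow, ENNReal.log_rpow]
    _ ≤ θ * ENNReal.log (∫⁻ ω, g ω ^ a ∂μ) := add_le_of_nonpos_right hlog_b

theorem tendsto_lintegral_rpow_nhds_zero {ι : Type*} {l : Filter ι} [l.IsCountablyGenerated]
    {f : ι → Ω → ℝ≥0∞} {g : Ω → ℝ≥0∞} {s : ℝ} (hs : 0 < s)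
    (hf : ∀ᶠ i in l, AEMeasurable (f i) μ) (hfg : ∀ᶠ i in l, ∀ ω, f i ω ≤ g ω)
    (hg : ∫⁻ ω, g ω ^ s ∂μ ≠ ∞) (hlim : ∀ᵐ ω ∂μ, Tendsto (fun i => f i ω) l (𝓝 0)) :
    Tendsto (fun i => ∫⁻ ω, f i ω ^ s ∂μ) l (𝓝 0) := by
  have hlim_s : ∀ᵐ ω ∂μ, Tendsto (fun i => f i ω ^ s) l (𝓝 0) := by
    filter_upwards [hlim] with ω hω
    simpa [Function.comp_def, ENNReal.zero_rpow_of_pos hs] using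
      ((ENNReal.continuous_rpow_const (y := s)).tendsto 0).comp hω
  simpa using tendsto_lintegral_filter_of_dominated_convergence' (fun ω => g ω ^ s)
    (hf.mono fun i hi => hi.pow_const s)
    (hfg.mono fun i hi => .of_forall fun ω => ENNReal.rpow_le_rpow (hi ω) hs.le) hg hlim_s

end MeasureTheory

theorem stmt_5_general {Ω : Type*} [MeasurableSpace Ω] (P : Measure Ω) [IsProbabilityMeasure P]
    (F : ℝ → Ω → ℝ)
    (hmeas : ∀ h : ℝ, 0 < h → h < 1 → Measurable (F h))
    (hnonneg : ∀ h : ℝ, 0 < h → h < 1 → ∀ ω, 0 ≤ F h ω)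
    (hmono : ∀ h h' : ℝ, 0 < h → h ≤ h' → h' < 1 → ∀ ω, F h ω ≤ F h' ω)
    (hlim : ∀ᵐ ω ∂P, Tendsto (fun h => F h ω) (nhdsWithin 0 (Set.Ioi 0)) (nhds 0))
    (hmom : ∀ m : ℝ, 1 ≤ m → ∀ h : ℝ, 0 < h → h < 1 →
      ∫⁻ ω, ENNReal.ofReal (F h ω ^ m) ∂P < ⊤)
    (A : ℝ → EReal)
    (hA : ∀ q : ℝ, A q = limsup
      (fun h => ENNReal.log (∫⁻ ω, ENNReal.ofReal (F h ω ^ (q / 2)) ∂P)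
        / (Real.log h : EReal))
      (nhdsWithin 0 (Set.Ioi 0))) :
    ∀ q p : ℝ, 1 ≤ q → q < p → A q ≤ A p := by
  intro q p hq hqp
  rw [hA q, hA p]
  refine EReal.limsup_le_limsup_of_forall_lt_one_mul_le fun θ hθ₀ hθ₁ => ?_
  set m := (p - θ * q) / (1 - θ) with hm_def
  have hpm : p / 2 = θ * (q / 2) + (1 - θ) * (m / 2) := by
    rw [hm_def]; field_simp [(sub_pos.2 hθ₁).ne']; ring
  have hm : 0 < m / 2 := by
    rw [hm_def]; exact half_pos (div_pos (by nlinarith) (sub_pos.2 hθ₁))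
  have hhalf : (1 / 2 : ℝ) ∈ Ioo 0 1 := by norm_num
  have htend : Tendsto (fun h => ∫⁻ ω, ENNReal.ofReal (F h ω) ^ (m / 2) ∂P) (𝓝[>] 0) (𝓝 0) := by
    refine tendsto_lintegral_rpow_nhds_zero (g := fun ω => ENNReal.ofReal (F (1 / 2) ω)) hm ?_ ?_
      (lintegral_rpow_ne_top_of_le hm.le (le_max_right 1 (m / 2)) ?_) ?_
    · filter_upwards [Ioo_mem_nhdsGT one_pos] with h hh
      exact (hmeas h hh.1 hh.2).ennreal_ofReal.aemeasurable
    · filter_upwards [Ioc_mem_nhdsGT hhalf.1] with h hh ω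
      exact ENNReal.ofReal_le_ofReal (hmono h _ hh.1 hh.2 hhalf.2 ω)
    · rw [← lintegral_ofReal_rpow (hnonneg _ hhalf.1 hhalf.2) (hm.le.trans (le_max_right _ _))]
      exact (hmom _ (le_max_left _ _) _ hhalf.1 hhalf.2).ne
    · filter_upwards [hlim] with ω hω
      simpa using ENNReal.tendsto_ofReal hω
  filter_upwards [Ioo_mem_nhdsGT one_pos, htend.eventually (eventually_le_nhds one_pos)]
    with h hh hsmall
  have hF := hnonneg h hh.1 hh.2
  rw [lintegral_ofReal_rpow hF (by linarith), lintegral_ofReal_rpow hF (by linarith), hpm,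
    EReal.mul_div]
  exact EReal.div_le_div_right_of_nonpos (by exact_mod_cast (Real.log_neg hh.1 hh.2).le)
    (log_lintegral_rpow_interpolation_le (hmeas h hh.1 hh.2).ennreal_ofReal.aemeasurable
      (by linarith) hm.le hθ₀.le hθ₁.le hsmall)

/-- Remark 3 (rem:increasing): if the nonnegative, monotone-in-`h` family `F_h`
tends to `0` a.s. as `h → 0⁺`, has finite moments of all orders `m ≥ 1` and positive
expectation, then the scaling exponent
`A(q) = limsup_{h→0⁺} log E[F_h^{q/2}] / log h` is nondecreasing on `[1,∞)`. -/
theorem stmt_5 {Ω : Type*} [MeasurableSpace Ω] (P : Measure Ω) [IsProbabilityMeasure P]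
    (F : ℝ → Ω → ℝ)
    (hmeas : ∀ h : ℝ, 0 < h → h < 1 → Measurable (F h))
    (hnonneg : ∀ h : ℝ, 0 < h → h < 1 → ∀ ω, 0 ≤ F h ω)
    (hmono : ∀ h h' : ℝ, 0 < h → h ≤ h' → h' < 1 → ∀ ω, F h ω ≤ F h' ω)
    (hlim : ∀ᵐ ω ∂P, Tendsto (fun h => F h ω) (nhdsWithin 0 (Set.Ioi 0)) (nhds 0))
    (hmom : ∀ m : ℝ, 1 ≤ m → ∀ h : ℝ, 0 < h → h < 1 →
      ∫⁻ ω, ENNReal.ofReal (F h ω ^ m) ∂P < ⊤)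
    (hpos : ∀ h : ℝ, 0 < h → h < 1 → 0 < ∫⁻ ω, ENNReal.ofReal (F h ω) ∂P)
    (A : ℝ → EReal)
    (hA : ∀ q : ℝ, A q = limsup
      (fun h => ENNReal.log (∫⁻ ω, ENNReal.ofReal (F h ω ^ (q / 2)) ∂P)
        / (Real.log h : EReal))
      (nhdsWithin 0 (Set.Ioi 0))) :
    ∀ q p : ℝ, 1 ≤ q → q < p → A q ≤ A p :=
  stmt_5_general P F hmeas hnonneg hmono hlim hmom A hA
end

section
/- Let a ≥ 0, h > 0 be real numbers, let l, q, p be reals with 1 ≤ l < q < p, and let B ∈ ℝ. Then a^p / h^B ≤ (l/q) · a^q / h^{Bq/l} + ((q−l)/q) · a^{q(p−l)/(q−l)}. -/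
/-! Young's inequality `αβ ≤ α^r/r + β^r'/r'` with the conjugate exponents `r = q/l`,
`r' = q/(q-l)`, applied to `α = a^l/h^B` and `β = a^(p-l)`. -/

namespace Real

lemma holderConjugate_div_div_sub {l q : ℝ} (hl : 0 < l) (hlq : l < q) :
    (q / l).HolderConjugate (q / (q - l)) := by
  have hq : q ≠ 0 := (hl.trans hlq).ne'
  have := HolderConjugate.inv_one_sub_inv (div_pos hl (hl.trans hlq))
    ((div_lt_one (hl.trans hlq)).2 hlq)
  rwa [inv_div, one_sub_div hq, inv_div] at this

lemma mul_rpow_le_young {a c l q p : ℝ} (ha : 0 ≤ a) (hc : 0 ≤ c) (hl : 0 < l) (hlq : l < q)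
    (hp : p ≠ 0) :
    c * a ^ p ≤ l / q * (c ^ (q / l) * a ^ q) + (q - l) / q * a ^ (q * (p - l) / (q - l)) := by
  have hq : 0 < q := hl.trans hlq
  have young := young_inequality_of_nonneg (mul_nonneg hc (rpow_nonneg ha l))
    (rpow_nonneg ha (p - l)) (holderConjugate_div_div_sub hl hlq)
  have hprod : c * a ^ l * a ^ (p - l) = c * a ^ p := by
    rw [mul_assoc, ← rpow_add' ha (by simpa using hp), add_sub_cancel]
  have hfirst : (c * a ^ l) ^ (q / l) = c ^ (q / l) * a ^ q := by
    rw [mul_rpow hc (rpow_nonneg ha l), ← rpow_mul ha, mul_div_cancel₀ q hl.ne']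
  have hsecond : (a ^ (p - l)) ^ (q / (q - l)) = a ^ (q * (p - l) / (q - l)) := by
    rw [← rpow_mul ha, mul_div_assoc', mul_comm]
  rw [hprod, hfirst, hsecond] at young
  refine young.trans_eq ?_
  field_simp

end Real

/-- Young-type pointwise inequality (2.14) of the paper. -/
theorem stmt_8 (a h : ℝ) (ha : 0 ≤ a) (hh : 0 < h)
    (l q p : ℝ) (hl : 1 ≤ l) (hlq : l < q) (hqp : q < p) (B : ℝ) :
    a ^ p / h ^ B ≤
      (l / q) * (a ^ q / h ^ (B * q / l)) + ((q - l) / q) * a ^ (q * (p - l) / (q - l)) := by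
  have hl0 : 0 < l := zero_lt_one.trans_le hl
  have hp : p ≠ 0 := (hl0.trans (hlq.trans hqp)).ne'
  have hpow : ((h ^ B)⁻¹) ^ (q / l) = (h ^ (B * q / l))⁻¹ := by
    rw [Real.inv_rpow (Real.rpow_nonneg hh.le B), ← Real.rpow_mul hh.le, mul_div_assoc]
  have := Real.mul_rpow_le_young ha (inv_nonneg.2 (Real.rpow_nonneg hh.le B)) hl0 hlq hp
  rwa [hpow, inv_mul_eq_div, inv_mul_eq_div] at this
end

section
/- Let g : ℝ → ℝ be differentiable on [0,∞) with g(0) = 0, and suppose there exists B > 0 such that for every t ≥ 0, if g(t) = 0 then g'(t) ≥ B. Then g(t) ≥ 0 for all t ≥ 0. -/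
/-!
At a zero of `g` the positive right derivative pushes `g` strictly above `0` just to the right,
and where `g > 0` continuity keeps it positive. So the closed set `{g ≥ 0}` contains `0` and
extends to the right from each of its points, hence by real induction it contains every `[0, t]`.
-/

open Set Filter Topology

theorem HasDerivWithinAt.eventually_nhdsGT_pos {g : ℝ → ℝ} {d x : ℝ}
    (hg : HasDerivWithinAt g d (Ici x) x) (hd : 0 < d) (hx : g x = 0) :
    ∀ᶠ u in 𝓝[>] x, 0 < g u := by
  have hslope := (hasDerivWithinAt_iff_tendsto_slope' self_notMem_Ioi).1 hg.Ioi_of_Ici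
  filter_upwards [hslope.eventually (eventually_gt_nhds hd), self_mem_nhdsWithin]
    with u hu_slope hxu
  exact pos_of_slope_pos hxu hu_slope hx

theorem ContinuousOn.nonneg_of_eventually_pos_right_of_eq_zero {g : ℝ → ℝ} {a b : ℝ}
    (hg : ContinuousOn g (Icc a b)) (ha : 0 ≤ g a)
    (hzero : ∀ x ∈ Ico a b, g x = 0 → ∀ᶠ u in 𝓝[>] x, 0 < g u) :
    ∀ x ∈ Icc a b, 0 ≤ g x := by
  refine fun x hx ↦
    IsClosed.Icc_subset_of_forall_mem_nhdsWithin (s := {u | 0 ≤ g u}) ?_ ha ?_ hx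
  · rw [inter_comm]
    exact hg.preimage_isClosed_of_isClosed isClosed_Icc isClosed_Ici
  · rintro x ⟨hgx : 0 ≤ g x, hxab⟩
    rcases hgx.eq_or_lt with hgx_eq | hgx_pos
    · exact (hzero x hxab hgx_eq.symm).mono fun _ hu ↦ hu.le
    · have hpos : ∀ᶠ u in 𝓝[Icc a b] x, 0 < g u :=
        (hg x (Ico_subset_Icc_self hxab)).eventually (lt_mem_nhds hgx_pos)
      exact Eventually.mono (nhdsWithin_le_of_mem (Icc_mem_nhdsGT_of_mem hxab) hpos)
        fun _ hu ↦ hu.le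

/-- No-downcrossing lemma: a differentiable function on `[0,∞)` vanishing at `0`,
whose derivative is bounded below by some `B > 0` at every zero, stays nonnegative. -/
theorem stmt_9 (g : ℝ → ℝ) (hdiff : DifferentiableOn ℝ g (Set.Ici 0))
    (hg0 : g 0 = 0) (B : ℝ) (hB : 0 < B)
    (hder : ∀ t, 0 ≤ t → g t = 0 → B ≤ derivWithin g (Set.Ici 0) t) :
    ∀ t, 0 ≤ t → 0 ≤ g t := by
  intro t ht
  refine (hdiff.continuousOn.mono Icc_subset_Ici_self).nonneg_of_eventually_pos_right_of_eq_zero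
    hg0.ge (fun x hx hgx ↦ ?_) t ⟨ht, le_rfl⟩
  have hderiv : HasDerivWithinAt g (derivWithin g (Ici 0) x) (Ici x) x :=
    (hdiff x hx.1).hasDerivWithinAt.mono (Ici_subset_Ici.2 hx.1)
  exact hderiv.eventually_nhdsGT_pos (hB.trans_le (hder x hx.1 hgx)) hgx
end

section
/- Let μ be a probability measure on [0,∞) whose tail function G(x) := μ((x,∞)) is strictly positive for all x > 0 and regularly varying at infinity with exponent −ξ, where ξ > 0. Then for every real p > ξ: lim_{x→∞} (log ∫_{[0,x]} u^p μ(du)) / (log x) = p − ξ. -/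
/-!
For the tail `G t = μ (t, ∞)`, iterating `G (2t) ≈ 2^(-ξ) G t` along dyadic scales gives,
for every `δ > 0`, Potter-type bounds `c t^(-ξ-δ) ≤ G t ≤ C t^(-ξ+δ)` for large `t`. Since
`∫_(t,2t] u^p dμ ≤ (2t)^p G t`, summing over dyadic shells bounds the truncated moment above by
`B x^(p-ξ+δ)`, a geometric sum because `p - ξ + δ > 0`. Below, the single shell `(x/2, x]`
carries a fixed fraction of the mass `G (x/2)`, which gives `b x^(p-ξ-δ)`. Taking logarithms
squeezes the limit.
-/

open Filter Set MeasureTheory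

lemma le_of_dyadic_step {g : ℝ → ℝ} {t₀ M : ℝ} (ht₀ : 0 < t₀)
    (hbase : ∀ t ∈ Icc t₀ (2 * t₀), g t ≤ M) (hstep : ∀ t ≥ t₀, g (2 * t) ≤ g t)
    {t : ℝ} (ht : t₀ ≤ t) : g t ≤ M := by
  have hblock : ∀ n : ℕ, ∀ t ∈ Icc t₀ (2 ^ (n + 1) * t₀), g t ≤ M := by
    intro n
    induction n with
    | zero => simpa using hbase
    | succ n ih =>
      rintro t ⟨hlo, hhi⟩
      by_cases hsmall : t ≤ 2 ^ (n + 1) * t₀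
      · exact ih t ⟨hlo, hsmall⟩
      · have hhalf : t / 2 ∈ Icc t₀ (2 ^ (n + 1) * t₀) := by
          constructor
          · have h2 : (2 : ℝ) ≤ 2 ^ (n + 1) := le_self_pow₀ one_le_two n.succ_ne_zero
            nlinarith
          · rw [pow_succ] at hhi; linarith
        calc g t = g (2 * (t / 2)) := by ring_nf
          _ ≤ g (t / 2) := hstep _ hhalf.1
          _ ≤ M := ih _ hhalf
  obtain ⟨n, hn⟩ := pow_unbounded_of_one_lt (t / t₀) one_lt_two
  refine hblock n t ⟨ht, ?_⟩
  rw [div_lt_iff₀ ht₀] at hn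
  rw [pow_succ]
  nlinarith [pow_pos (two_pos (α := ℝ)) n]

lemma exists_le_mul_rpow_of_two_mul_le {G : ℝ → ℝ} {t₀ e K : ℝ} (ht₀ : 0 < t₀)
    (hbase : ∀ t ∈ Icc t₀ (2 * t₀), G t ≤ K) (hstep : ∀ t ≥ t₀, G (2 * t) ≤ 2 ^ e * G t) :
    ∃ C, ∀ t ≥ t₀, G t ≤ C * t ^ e := by
  have hcont : ContinuousOn (fun t : ℝ => t ^ (-e)) (Icc t₀ (2 * t₀)) := fun t ht =>
    (Real.continuousAt_rpow_const _ _ (Or.inl (ht₀.trans_le ht.1).ne')).continuousWithinAt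
  obtain ⟨R, hR⟩ := isCompact_Icc.exists_bound_of_continuousOn hcont
  refine ⟨max K 0 * R, fun t ht => ?_⟩
  have ht0 : 0 < t := ht₀.trans_le ht
  -- `G t * t ^ (-e)` does not increase when `t` doubles
  have hg : G t * t ^ (-e) ≤ max K 0 * R := by
    refine le_of_dyadic_step (g := fun t => G t * t ^ (-e)) ht₀ (fun s hs => ?_)
      (fun s hs => ?_) ht
    · have hs0 : 0 ≤ s ^ (-e) := Real.rpow_nonneg (ht₀.le.trans hs.1) _
      have hsR : s ^ (-e) ≤ R := by simpa [abs_of_nonneg hs0] using hR s hs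
      calc G s * s ^ (-e) ≤ max K 0 * s ^ (-e) :=
            mul_le_mul_of_nonneg_right ((hbase s hs).trans (le_max_left _ _)) hs0
        _ ≤ max K 0 * R := mul_le_mul_of_nonneg_left hsR (le_max_right _ _)
    · have hs0 : 0 < s := ht₀.trans_le hs
      calc G (2 * s) * (2 * s) ^ (-e) ≤ 2 ^ e * G s * (2 ^ (-e) * s ^ (-e)) := by
            rw [Real.mul_rpow zero_le_two hs0.le]
            exact mul_le_mul_of_nonneg_right (hstep s hs) (by positivity)
        _ = G s * s ^ (-e) := by
            rw [Real.rpow_neg zero_le_two]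
            field_simp
  calc G t = G t * t ^ (-e) * t ^ e := by
        rw [mul_assoc, ← Real.rpow_add ht0, neg_add_cancel, Real.rpow_zero, mul_one]
    _ ≤ max K 0 * R * t ^ e := mul_le_mul_of_nonneg_right hg (by positivity)

lemma eventually_two_mul_le_of_tendsto_div {G : ℝ → ℝ} {L r : ℝ}
    (hpos : ∀ᶠ t in atTop, 0 < G t) (hG : Tendsto (fun t => G (t * 2) / G t) atTop (nhds L))
    (hLr : L < r) : ∀ᶠ t in atTop, G (2 * t) ≤ r * G t := by
  filter_upwards [hpos, hG.eventually_lt_const hLr] with t ht hlt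
  rw [div_lt_iff₀ ht, mul_comm t] at hlt
  exact hlt.le

lemma eventually_le_two_mul_of_tendsto_div {G : ℝ → ℝ} {L r : ℝ}
    (hpos : ∀ᶠ t in atTop, 0 < G t) (hG : Tendsto (fun t => G (t * 2) / G t) atTop (nhds L))
    (hrL : r < L) : ∀ᶠ t in atTop, r * G t ≤ G (2 * t) := by
  filter_upwards [hpos, hG.eventually_const_lt hrL] with t ht hlt
  rw [lt_div_iff₀ ht, mul_comm t] at hlt
  exact hlt.le

lemma Antitone.exists_le_mul_rpow {G : ℝ → ℝ} (hG : Antitone G) {e : ℝ}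
    (hstep : ∀ᶠ t in atTop, G (2 * t) ≤ 2 ^ e * G t) :
    ∃ C, ∀ᶠ t in atTop, G t ≤ C * t ^ e := by
  obtain ⟨N, hN⟩ := eventually_atTop.1 hstep
  have ht₀ : 0 < max N 1 := lt_max_of_lt_right one_pos
  obtain ⟨C, hC⟩ := exists_le_mul_rpow_of_two_mul_le ht₀ (fun t ht => hG ht.1)
    (fun t ht => hN t ((le_max_left _ _).trans ht))
  exact ⟨C, eventually_atTop.2 ⟨_, hC⟩⟩

lemma Antitone.exists_mul_rpow_le {G : ℝ → ℝ} (hG : Antitone G) {e : ℝ}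
    (hpos : ∀ᶠ t in atTop, 0 < G t) (hstep : ∀ᶠ t in atTop, 2 ^ e * G t ≤ G (2 * t)) :
    ∃ c > 0, ∀ᶠ t in atTop, c * t ^ e ≤ G t := by
  obtain ⟨N, hN⟩ := eventually_atTop.1 (hpos.and hstep)
  set t₀ := max N 1
  have ht₀ : 0 < t₀ := lt_max_of_lt_right one_pos
  have hN' : ∀ t ≥ t₀, 0 < G t ∧ 2 ^ e * G t ≤ G (2 * t) :=
    fun t ht => hN t ((le_max_left _ _).trans ht)
  -- the upper bound for `1 / G` is a lower bound for `G`
  obtain ⟨C, hC⟩ := exists_le_mul_rpow_of_two_mul_le (G := fun t => (G t)⁻¹) (e := -e)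
    (K := (G (2 * t₀))⁻¹) ht₀
    (fun t ht => inv_anti₀ (hN' _ (by linarith [ht.1])).1 (hG ht.2))
    (fun t ht => by
      have h2e : (0 : ℝ) < 2 ^ e := by positivity
      calc (G (2 * t))⁻¹ ≤ (2 ^ e * G t)⁻¹ :=
            inv_anti₀ (mul_pos h2e (hN' t ht).1) (hN' t ht).2
        _ = 2 ^ (-e) * (G t)⁻¹ := by rw [mul_inv, Real.rpow_neg zero_le_two])
  have hCpos : 0 < C := by
    have h := (inv_pos.2 (hN' t₀ le_rfl).1).trans_le (hC t₀ le_rfl)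
    exact pos_of_mul_pos_left h (by positivity)
  refine ⟨C⁻¹, inv_pos.2 hCpos, eventually_atTop.2 ⟨t₀, fun t ht => ?_⟩⟩
  have ht0 : 0 < t := ht₀.trans_le ht
  have h := (inv_le_comm₀ (hN' t ht).1 (by positivity)).1 (hC t ht)
  rwa [mul_inv, Real.rpow_neg ht0.le, inv_inv] at h

lemma Monotone.exists_le_mul_rpow_of_two_mul_le_add {I : ℝ → ℝ} (hI : Monotone I) {q C : ℝ}
    (hq : 0 < q) (hstep : ∀ᶠ t in atTop, I (2 * t) ≤ I t + C * t ^ q) :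
    ∃ B, ∀ᶠ t in atTop, I t ≤ B * t ^ q := by
  obtain ⟨N, hN⟩ := eventually_atTop.1 hstep
  set t₀ := max N 1
  have ht₀ : 0 < t₀ := lt_max_of_lt_right one_pos
  have h2q : 0 < (2 : ℝ) ^ q - 1 := by
    linarith [Real.one_lt_rpow one_lt_two hq]
  set A := max C 0 / (2 ^ q - 1)
  have hA : 0 ≤ A := div_nonneg (le_max_right _ _) h2q.le
  -- `max (I t) (A * t ^ q)` grows by at most the factor `2 ^ q` when `t` doubles
  obtain ⟨B, hB⟩ := exists_le_mul_rpow_of_two_mul_le (G := fun t => max (I t) (A * t ^ q))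
    (K := max (I (2 * t₀)) (A * (2 * t₀) ^ q)) ht₀
    (fun t ht => max_le_max (hI ht.2)
      (mul_le_mul_of_nonneg_left (Real.rpow_le_rpow (by linarith [ht.1]) ht.2 hq.le) hA))
    (fun t ht => by
      have ht0 : 0 < t := ht₀.trans_le ht
      have hAt : A * t ^ q ≤ max (I t) (A * t ^ q) := le_max_right _ _
      have hCA : C ≤ (2 ^ q - 1) * A := by
        rw [mul_div_cancel₀ _ h2q.ne']; exact le_max_left _ _
      refine max_le ?_ ?_
      · calc I (2 * t) ≤ I t + C * t ^ q := hN t ((le_max_left _ _).trans ht)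
          _ ≤ max (I t) (A * t ^ q) + (2 ^ q - 1) * max (I t) (A * t ^ q) := by
            refine add_le_add (le_max_left _ _) ?_
            calc C * t ^ q ≤ (2 ^ q - 1) * A * t ^ q :=
                  mul_le_mul_of_nonneg_right hCA (by positivity)
              _ ≤ (2 ^ q - 1) * max (I t) (A * t ^ q) := by
                  rw [mul_assoc]; exact mul_le_mul_of_nonneg_left hAt h2q.le
          _ = 2 ^ q * max (I t) (A * t ^ q) := by ring
      · rw [Real.mul_rpow zero_le_two ht0.le]
        nlinarith [Real.rpow_pos_of_pos two_pos q])
  exact ⟨B, eventually_atTop.2 ⟨t₀, fun t ht => (le_max_left _ _).trans (hB t ht)⟩⟩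

lemma tendsto_log_mul_rpow_div_log {b : ℝ} (hb : 0 < b) (c : ℝ) :
    Tendsto (fun x => Real.log (b * x ^ c) / Real.log x) atTop (nhds c) := by
  have h : Tendsto (fun x => Real.log b / Real.log x + c) atTop (nhds c) := by
    simpa using
      ((tendsto_const_nhds (x := Real.log b)).div_atTop Real.tendsto_log_atTop).add_const c
  refine h.congr' ?_
  filter_upwards [eventually_gt_atTop 1] with x hx
  have hlog : Real.log x ≠ 0 := (Real.log_pos hx).ne'
  rw [Real.log_mul hb.ne' (by positivity), Real.log_rpow (by linarith), add_div,
    mul_div_cancel_right₀ _ hlog]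

lemma tendsto_log_div_log_of_rpow_bounds {f : ℝ → ℝ} {a : ℝ}
    (hlow : ∀ a' < a, ∃ b > 0, ∀ᶠ x in atTop, b * x ^ a' ≤ f x)
    (hup : ∀ a' > a, ∃ B, ∀ᶠ x in atTop, f x ≤ B * x ^ a') :
    Tendsto (fun x => Real.log (f x) / Real.log x) atTop (nhds a) := by
  refine tendsto_order.2 ⟨fun a' ha' => ?_, fun a' ha' => ?_⟩
  · obtain ⟨a'', ha'a'', ha''a⟩ := exists_between ha'
    obtain ⟨b, hb, hbf⟩ := hlow a'' ha''a
    filter_upwards [hbf, (tendsto_log_mul_rpow_div_log hb a'').eventually_const_lt ha'a'',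
      eventually_gt_atTop 1] with x hx hlt hx1
    refine hlt.trans_le (div_le_div_of_nonneg_right ?_ (Real.log_pos hx1).le)
    exact Real.log_le_log (by positivity) hx
  · obtain ⟨a'', ha'', ha''a'⟩ := exists_between ha'
    obtain ⟨B, hBf⟩ := hup a'' ha''
    obtain ⟨b, hb, hbf⟩ := hlow (a - 1) (by linarith)
    filter_upwards [hBf, hbf,
      (tendsto_log_mul_rpow_div_log (lt_max_of_lt_right one_pos) a'').eventually_lt_const
        ha''a', eventually_gt_atTop 1] with x hx hfpos hlt hx1
    refine lt_of_le_of_lt (div_le_div_of_nonneg_right ?_ (Real.log_pos hx1).le) hlt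
    refine Real.log_le_log (lt_of_lt_of_le (by positivity) hfpos) (hx.trans ?_)
    exact mul_le_mul_of_nonneg_right (le_max_left _ _) (by positivity)

section TruncatedMoments

variable {μ : Measure ℝ} [IsFiniteMeasure μ] {p : ℝ}

lemma integrableOn_rpow_Icc (hp : 0 ≤ p) (x : ℝ) :
    IntegrableOn (fun u : ℝ => u ^ p) (Icc 0 x) μ :=
  (Real.continuous_rpow_const hp).continuousOn.integrableOn_compact isCompact_Icc

lemma monotone_setIntegral_Icc_rpow (hp : 0 ≤ p) :
    Monotone fun x => ∫ u in Icc 0 x, u ^ p ∂μ := fun _ y hxy =>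
  setIntegral_mono_set (integrableOn_rpow_Icc hp y)
    ((ae_restrict_iff' measurableSet_Icc).2 (ae_of_all _ fun _ hu => Real.rpow_nonneg hu.1 p))
    (Icc_subset_Icc_right hxy).eventuallyLE

lemma setIntegral_Icc_rpow_eq_add (hp : 0 ≤ p) {a b : ℝ} (ha : 0 ≤ a) (hab : a ≤ b) :
    ∫ u in Icc 0 b, u ^ p ∂μ = (∫ u in Icc 0 a, u ^ p ∂μ) + ∫ u in Ioc a b, u ^ p ∂μ := by
  rw [← Icc_union_Ioc_eq_Icc ha hab]
  exact setIntegral_union ((Iic_disjoint_Ioc le_rfl).mono_left Icc_subset_Iic_self)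
    measurableSet_Ioc (integrableOn_rpow_Icc hp a)
    ((integrableOn_rpow_Icc hp b).mono_set fun u hu => ⟨ha.trans hu.1.le, hu.2⟩)

lemma setIntegral_Ioc_rpow_le (hp : 0 ≤ p) {a b : ℝ} (ha : 0 ≤ a) (hab : a ≤ b) :
    ∫ u in Ioc a b, u ^ p ∂μ ≤ b ^ p * μ.real (Ioi a) := by
  calc ∫ u in Ioc a b, u ^ p ∂μ ≤ ∫ _ in Ioc a b, b ^ p ∂μ :=
        setIntegral_mono_on ((integrableOn_rpow_Icc hp b).mono_set
          fun u hu => ⟨ha.trans hu.1.le, hu.2⟩) (integrableOn_const (measure_ne_top _ _))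
          measurableSet_Ioc fun u hu => Real.rpow_le_rpow (ha.trans hu.1.le) hu.2 hp
    _ = b ^ p * μ.real (Ioc a b) := by rw [setIntegral_const, smul_eq_mul, mul_comm]
    _ ≤ b ^ p * μ.real (Ioi a) := mul_le_mul_of_nonneg_left
        (measureReal_mono Ioc_subset_Ioi_self) (Real.rpow_nonneg (ha.trans hab) p)

lemma mul_measureReal_Ioc_le_setIntegral_Ioc_rpow (hp : 0 ≤ p) {a b : ℝ} (ha : 0 ≤ a)
    (hab : a ≤ b) : a ^ p * (μ.real (Ioi a) - μ.real (Ioi b)) ≤ ∫ u in Ioc a b, u ^ p ∂μ := by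
  rw [← measureReal_sdiff (Ioi_subset_Ioi hab) measurableSet_Ioi, Ioi_sdiff_Ioi]
  exact setIntegral_ge_of_const_le_real measurableSet_Ioc (measure_ne_top _ _)
    (fun u hu => Real.rpow_le_rpow ha hu.1.le hp)
    ((integrableOn_rpow_Icc hp b).mono_set fun u hu => ⟨ha.trans hu.1.le, hu.2⟩)

lemma exists_setIntegral_Icc_rpow_le (hp : 0 ≤ p) {q C : ℝ} (hq : 0 < q)
    (htail : ∀ᶠ t in atTop, μ.real (Ioi t) ≤ C * t ^ (q - p)) :
    ∃ B, ∀ᶠ x in atTop, ∫ u in Icc 0 x, u ^ p ∂μ ≤ B * x ^ q := by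
  refine (monotone_setIntegral_Icc_rpow hp).exists_le_mul_rpow_of_two_mul_le_add
    (C := 2 ^ p * C) hq ?_
  filter_upwards [htail, eventually_gt_atTop 0] with t ht ht0
  rw [setIntegral_Icc_rpow_eq_add hp ht0.le (by linarith)]
  gcongr
  calc ∫ u in Ioc t (2 * t), u ^ p ∂μ ≤ (2 * t) ^ p * μ.real (Ioi t) :=
        setIntegral_Ioc_rpow_le hp ht0.le (by linarith)
    _ ≤ (2 * t) ^ p * (C * t ^ (q - p)) := by gcongr
    _ = 2 ^ p * C * t ^ q := by
        rw [Real.mul_rpow zero_le_two ht0.le, Real.rpow_sub ht0]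
        field_simp

lemma exists_mul_rpow_le_setIntegral_Icc_rpow (hp : 0 ≤ p) {q r c : ℝ} (hr : r < 1)
    (hc : 0 < c) (hstep : ∀ᶠ t in atTop, μ.real (Ioi (2 * t)) ≤ r * μ.real (Ioi t))
    (htail : ∀ᶠ t in atTop, c * t ^ (q - p) ≤ μ.real (Ioi t)) :
    ∃ b > 0, ∀ᶠ x in atTop, b * x ^ q ≤ ∫ u in Icc 0 x, u ^ p ∂μ := by
  refine ⟨(1 - r) * c * 2 ^ (-q), by have := sub_pos.2 hr; positivity, ?_⟩
  have hhalf : Tendsto (fun x : ℝ => x / 2) atTop atTop := tendsto_id.atTop_div_const two_pos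
  filter_upwards [hhalf.eventually hstep, hhalf.eventually htail, eventually_gt_atTop 0]
    with x hstep htail hx
  have hx2 : 0 < x / 2 := by positivity
  calc (1 - r) * c * 2 ^ (-q) * x ^ q
        = (x / 2) ^ p * ((1 - r) * (c * (x / 2) ^ (q - p))) := by
        rw [Real.rpow_sub hx2, Real.div_rpow hx.le zero_le_two q, Real.rpow_neg zero_le_two]
        field_simp
    _ ≤ (x / 2) ^ p * (μ.real (Ioi (x / 2)) - μ.real (Ioi x)) := by
        have hx' : μ.real (Ioi x) ≤ r * μ.real (Ioi (x / 2)) := by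
          simpa [mul_div_cancel₀] using hstep
        have := mul_le_mul_of_nonneg_left htail (sub_pos.2 hr).le
        gcongr
        linarith
    _ ≤ ∫ u in Ioc (x / 2) x, u ^ p ∂μ :=
        mul_measureReal_Ioc_le_setIntegral_Ioc_rpow hp hx2.le (by linarith)
    _ ≤ ∫ u in Icc 0 x, u ^ p ∂μ := by
        rw [setIntegral_Icc_rpow_eq_add hp hx2.le (by linarith)]
        exact le_add_of_nonneg_left (setIntegral_nonneg measurableSet_Icc
          fun u hu => Real.rpow_nonneg hu.1 p)

end TruncatedMoments

theorem stmt_16_general (μ : Measure ℝ) [IsProbabilityMeasure μ]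
    (ξ : ℝ) (hξ : 0 < ξ)
    (hpos : ∀ x : ℝ, 0 < x → 0 < (μ (Set.Ioi x)).toReal)
    (hRV : ∀ x : ℝ, 0 < x →
      Tendsto (fun t => (μ (Set.Ioi (t * x))).toReal / (μ (Set.Ioi t)).toReal)
        atTop (nhds (x ^ (-ξ)))) :
    ∀ p : ℝ, ξ < p →
      Tendsto (fun x => Real.log (∫ u in Set.Icc 0 x, u ^ p ∂μ) / Real.log x)
        atTop (nhds (p - ξ)) := by
  intro p hp
  have hp0 : 0 ≤ p := (hξ.trans hp).le
  have hanti : Antitone fun t => μ.real (Ioi t) := fun _ _ hst =>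
    measureReal_mono (Ioi_subset_Ioi hst)
  have htail_pos : ∀ᶠ t in atTop, 0 < μ.real (Ioi t) := (eventually_gt_atTop 0).mono hpos
  have hratio := hRV 2 two_pos
  refine tendsto_log_div_log_of_rpow_bounds (fun a ha => ?_) (fun a ha => ?_)
  · obtain ⟨r, h2r, hr1⟩ := exists_between (Real.rpow_lt_one_of_one_lt_of_neg one_lt_two
      (neg_neg_of_pos hξ))
    obtain ⟨c, hc, htail⟩ := hanti.exists_mul_rpow_le htail_pos
      (eventually_le_two_mul_of_tendsto_div htail_pos hratio
        (Real.rpow_lt_rpow_of_exponent_lt one_lt_two (by linarith : a - p < -ξ)))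
    exact exists_mul_rpow_le_setIntegral_Icc_rpow hp0 hr1 hc
      (eventually_two_mul_le_of_tendsto_div htail_pos hratio h2r) htail
  · obtain ⟨C, htail⟩ := hanti.exists_le_mul_rpow
      (eventually_two_mul_le_of_tendsto_div htail_pos hratio
        (Real.rpow_lt_rpow_of_exponent_lt one_lt_two (by linarith : -ξ < a - p)))
    exact exists_setIntegral_Icc_rpow_le hp0 (by linarith) htail

/-- Relation (3.30) (main23): truncated moments of a distribution with regularly
varying tail of index `-ξ`, for `p > ξ`. -/
theorem stmt_16 (μ : Measure ℝ) [IsProbabilityMeasure μ] (hsupp : μ (Set.Iio 0) = 0)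
    (ξ : ℝ) (hξ : 0 < ξ)
    (hpos : ∀ x : ℝ, 0 < x → 0 < (μ (Set.Ioi x)).toReal)
    (hRV : ∀ x : ℝ, 0 < x →
      Tendsto (fun t => (μ (Set.Ioi (t * x))).toReal / (μ (Set.Ioi t)).toReal)
        atTop (nhds (x ^ (-ξ)))) :
    ∀ p : ℝ, ξ < p →
      Tendsto (fun x => Real.log (∫ u in Set.Icc 0 x, u ^ p ∂μ) / Real.log x)
        atTop (nhds (p - ξ)) :=
  stmt_16_general μ ξ hξ hpos hRV
end

section
/- Let μ be a probability measure on [0,∞) whose tail function G(x) := μ((x,∞)) is strictly positive for all x > 0 and regularly varying at infinity with exponent −ξ, where ξ > 0. Then for every real p with 0 ≤ p < ξ, the integral ∫_{(x,∞)} u^p μ(du) is finite for every x > 0 sufficiently large, and lim_{x→∞} (log ∫_{(x,∞)} u^p μ(du)) / (log x) = p − ξ. -/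
/-!
Write `G t = μ (Ioi t)`. Because `G` is monotone, the ratio condition at the single scale `2`
already forces `log G t / log t → -ξ`: along `t = 2ⁿ` this is Cesàro averaging of the increments
`log G (2ⁿ⁺¹) - log G (2ⁿ) → -ξ log 2`, and monotonicity interpolates between dyadic points.
For the moments, `x ^ p * G x ≤ ∫_{(x,∞)} u ^ p dμ`, while cutting `(x, ∞)` into the dyadic
shells `(2ᵏ x, 2ᵏ⁺¹ x]` and using `G (2t) ≤ r G t` with `2 ^ p * r < 1` bounds the integral by a
geometric series, `≤ K * x ^ p * G x`. So the integral is finite and its logarithm is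
`p log x + log G x + O(1)`.
-/

open Filter MeasureTheory Set Real Topology

theorem tendsto_div_natCast_of_tendsto_sub_succ {u : ℕ → ℝ} {c : ℝ}
    (h : Tendsto (fun n => u (n + 1) - u n) atTop (𝓝 c)) :
    Tendsto (fun n : ℕ => u n / n) atTop (𝓝 c) := by
  have hmean : Tendsto (fun n : ℕ => (n : ℝ)⁻¹ * (u n - u 0)) atTop (𝓝 c) := by
    simpa only [Finset.sum_range_sub] using h.cesaro
  simpa [div_eq_inv_mul, mul_sub] using
    hmean.add (tendsto_const_div_atTop_nhds_zero_nat (u 0))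

theorem Real.pow_natFloor_logb_le {b t : ℝ} (hb : 1 < b) (ht : 1 ≤ t) :
    b ^ ⌊logb b t⌋₊ ≤ t := by
  rw [← rpow_natCast, ← le_logb_iff_rpow_le hb (by linarith)]
  exact Nat.floor_le (logb_nonneg hb ht)

theorem Real.lt_pow_natFloor_logb_add_one {b t : ℝ} (hb : 1 < b) (ht : 0 < t) :
    t < b ^ (⌊logb b t⌋₊ + 1) := by
  rw [← rpow_natCast, ← logb_lt_iff_lt_rpow hb ht, Nat.cast_add_one]
  exact Nat.lt_floor_add_one _

theorem tendsto_div_log_of_antitoneOn {L : ℝ → ℝ} {b c : ℝ} (hb : 1 < b)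
    (hL : AntitoneOn L (Ici 1)) (h : Tendsto (fun t => L (t * b) - L t) atTop (𝓝 c)) :
    Tendsto (fun t => L t / log t) atTop (𝓝 (c / log b)) := by
  set u : ℕ → ℝ := fun n => L (b ^ n)
  have hu : Tendsto (fun n => u (n + 1) - u n) atTop (𝓝 c) := by
    refine (h.comp (tendsto_pow_atTop_atTop_of_one_lt hb)).congr fun n => ?_
    simp only [Function.comp_apply, u, pow_succ]
  set N : ℝ → ℕ := fun t => ⌊logb b t⌋₊
  have hN : Tendsto N atTop atTop := tendsto_nat_floor_atTop.comp (tendsto_logb_atTop hb)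
  have hNlog : Tendsto (fun t => (N t : ℝ) / log t) atTop (𝓝 (1 / log b)) := by
    convert (tendsto_nat_floor_div_atTop.comp (tendsto_logb_atTop hb)).div_const (log b)
      using 2 with t
    simp [N, logb, div_div, div_mul_cancel₀ _ (log_pos hb).ne']
  have hupper : Tendsto (fun t => u (N t) / log t) atTop (𝓝 (c / log b)) := by
    rw [← mul_one_div]
    refine ((tendsto_div_natCast_of_tendsto_sub_succ hu).comp hN |>.mul hNlog).congr' ?_
    filter_upwards [hN.eventually_ge_atTop 1] with t ht
    exact div_mul_div_cancel₀ (by exact_mod_cast (Nat.one_le_iff_ne_zero.mp ht))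
  have hlower : Tendsto (fun t => u (N t + 1) / log t) atTop (𝓝 (c / log b)) := by
    have hjump := (hu.comp hN).div_atTop tendsto_log_atTop
    simpa using (hupper.add hjump).congr fun t => by simp only [Function.comp_apply]; ring
  refine tendsto_of_tendsto_of_tendsto_of_le_of_le' hlower hupper ?_ ?_ <;>
    filter_upwards [eventually_ge_atTop 1] with t ht <;>
    refine div_le_div_of_nonneg_right ?_ (log_nonneg ht)
  · exact hL ht (one_le_pow₀ hb.le) (lt_pow_natFloor_logb_add_one hb (by linarith)).le
  · exact hL (one_le_pow₀ hb.le) ht (pow_natFloor_logb_le hb ht)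

theorem tendsto_log_div_log_of_tendsto_div {G : ℝ → ℝ} {b α : ℝ} (hb : 1 < b)
    (hG : Antitone G) (hpos : ∀ t, 0 < t → 0 < G t)
    (h : Tendsto (fun t => G (t * b) / G t) atTop (𝓝 (b ^ α))) :
    Tendsto (fun t => log (G t) / log t) atTop (𝓝 α) := by
  have hL : AntitoneOn (fun t => log (G t)) (Ici 1) := fun s hs _ _ hst =>
    log_le_log (hpos _ (by linarith [mem_Ici.1 hs, hst])) (hG hst)
  have hdiff : Tendsto (fun t => log (G (t * b)) - log (G t)) atTop (𝓝 (α * log b)) := by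
    rw [← log_rpow (by linarith)]
    refine ((continuousAt_log (rpow_pos_of_pos (by linarith) α).ne').tendsto.comp h).congr' ?_
    filter_upwards [eventually_gt_atTop 0] with t ht
    exact log_div (hpos _ (by nlinarith)).ne' (hpos t ht).ne'
  simpa [mul_div_cancel_right₀ _ (log_pos hb).ne'] using tendsto_div_log_of_antitoneOn hb hL hdiff

theorem Ioi_subset_iUnion_Ioc_mul_pow {x b : ℝ} (hx : 0 < x) (hb : 1 < b) :
    Ioi x ⊆ ⋃ k : ℕ, Ioc (x * b ^ k) (x * b ^ (k + 1)) := by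
  intro u hu
  obtain ⟨n, hn⟩ := exists_mem_Ioc_zpow (div_pos (hx.trans hu) hx) hb
  have hn0 : 0 ≤ n := by
    by_contra! hneg
    have : b ^ (n + 1) ≤ 1 := zpow_le_one_of_nonpos₀ hb.le (by omega)
    linarith [hn.2, (one_lt_div hx).2 (mem_Ioi.1 hu)]
  lift n to ℕ using hn0
  rw [mem_iUnion]
  refine ⟨n, ?_, ?_⟩
  · simpa [mul_comm x, lt_div_iff₀ hx] using hn.1
  · simpa [mul_comm x, div_le_iff₀ hx, ← zpow_natCast] using hn.2

theorem lintegral_Ioi_rpow_le {μ : Measure ℝ} {p b t₀ x : ℝ} {r : ENNReal} (hp : 0 ≤ p)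
    (hb : 1 < b) (ht₀ : 0 < t₀) (hstep : ∀ t, t₀ ≤ t → μ (Ioi (t * b)) ≤ r * μ (Ioi t))
    (hx : t₀ ≤ x) :
    ∫⁻ u in Ioi x, ENNReal.ofReal (u ^ p) ∂μ ≤
      (1 - ENNReal.ofReal (b ^ p) * r)⁻¹ * ENNReal.ofReal (b ^ p) *
        (ENNReal.ofReal (x ^ p) * μ (Ioi x)) := by
  have hx0 : 0 < x := ht₀.trans_le hx
  set q := ENNReal.ofReal (b ^ p)
  have hgeom : ∀ k : ℕ, μ (Ioi (x * b ^ k)) ≤ r ^ k * μ (Ioi x) := by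
    intro k
    induction k with
    | zero => simp
    | succ k ih =>
      calc μ (Ioi (x * b ^ (k + 1))) = μ (Ioi (x * b ^ k * b)) := by rw [pow_succ, mul_assoc]
        _ ≤ r * μ (Ioi (x * b ^ k)) :=
          hstep _ (hx.trans (le_mul_of_one_le_right hx0.le (one_le_pow₀ hb.le)))
        _ ≤ r * (r ^ k * μ (Ioi x)) := by gcongr
        _ = r ^ (k + 1) * μ (Ioi x) := by ring
  have hpiece : ∀ k : ℕ, ∫⁻ u in Ioc (x * b ^ k) (x * b ^ (k + 1)), ENNReal.ofReal (u ^ p) ∂μ ≤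
      (q * r) ^ k * (q * (ENNReal.ofReal (x ^ p) * μ (Ioi x))) := by
    intro k
    have hbk : 0 < x * b ^ k := by positivity
    have hval : ENNReal.ofReal ((x * b ^ (k + 1)) ^ p) = q ^ (k + 1) * ENNReal.ofReal (x ^ p) := by
      rw [mul_rpow hx0.le (by positivity), ← rpow_pow_comm (by linarith),
        ENNReal.ofReal_mul (by positivity), ENNReal.ofReal_pow (by positivity), mul_comm]
    calc ∫⁻ u in Ioc (x * b ^ k) (x * b ^ (k + 1)), ENNReal.ofReal (u ^ p) ∂μ
        ≤ ∫⁻ u in Ioc (x * b ^ k) (x * b ^ (k + 1)), ENNReal.ofReal ((x * b ^ (k + 1)) ^ p) ∂μ :=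
          setLIntegral_mono measurable_const fun u hu =>
            ENNReal.ofReal_le_ofReal (rpow_le_rpow (hbk.trans hu.1).le hu.2 hp)
      _ = q ^ (k + 1) * ENNReal.ofReal (x ^ p) * μ (Ioc (x * b ^ k) (x * b ^ (k + 1))) := by
          rw [setLIntegral_const, hval]
      _ ≤ q ^ (k + 1) * ENNReal.ofReal (x ^ p) * (r ^ k * μ (Ioi x)) := by
          gcongr
          exact (measure_mono Ioc_subset_Ioi_self).trans (hgeom k)
      _ = (q * r) ^ k * (q * (ENNReal.ofReal (x ^ p) * μ (Ioi x))) := by ring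
  calc ∫⁻ u in Ioi x, ENNReal.ofReal (u ^ p) ∂μ
      ≤ ∫⁻ u in ⋃ k : ℕ, Ioc (x * b ^ k) (x * b ^ (k + 1)), ENNReal.ofReal (u ^ p) ∂μ :=
        lintegral_mono_set (Ioi_subset_iUnion_Ioc_mul_pow hx0 hb)
    _ ≤ ∑' k : ℕ, ∫⁻ u in Ioc (x * b ^ k) (x * b ^ (k + 1)), ENNReal.ofReal (u ^ p) ∂μ :=
        lintegral_iUnion_le _ _
    _ ≤ ∑' k : ℕ, (q * r) ^ k * (q * (ENNReal.ofReal (x ^ p) * μ (Ioi x))) :=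
        ENNReal.tsum_le_tsum hpiece
    _ = (1 - q * r)⁻¹ * q * (ENNReal.ofReal (x ^ p) * μ (Ioi x)) := by
        rw [ENNReal.tsum_mul_right, ENNReal.tsum_geometric, mul_assoc]

theorem ofReal_rpow_mul_measure_Ioi_le_lintegral {μ : Measure ℝ} {p x : ℝ} (hp : 0 ≤ p)
    (hx : 0 ≤ x) :
    ENNReal.ofReal (x ^ p) * μ (Ioi x) ≤ ∫⁻ u in Ioi x, ENNReal.ofReal (u ^ p) ∂μ := by
  rw [← setLIntegral_const]
  exact setLIntegral_mono (by fun_prop) fun u hu =>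
    ENNReal.ofReal_le_ofReal (rpow_le_rpow hx (le_of_lt hu) hp)

theorem tendsto_log_div_log_of_le_of_le_mul {T a : ℝ → ℝ} {K β : ℝ}
    (ha : ∀ᶠ x in atTop, 0 < a x) (hT : ∀ᶠ x in atTop, a x ≤ T x ∧ T x ≤ K * a x)
    (h : Tendsto (fun x => log (a x) / log x) atTop (𝓝 β)) :
    Tendsto (fun x => log (T x) / log x) atTop (𝓝 β) := by
  have hK : Tendsto (fun x => log K / log x + log (a x) / log x) atTop (𝓝 β) := by
    simpa using (tendsto_const_nhds.div_atTop tendsto_log_atTop).add h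
  refine tendsto_of_tendsto_of_tendsto_of_le_of_le' h hK ?_ ?_ <;>
    filter_upwards [ha, hT, eventually_gt_atTop 1] with x hax ⟨hlo, hhi⟩ hx
  · exact div_le_div_of_nonneg_right (log_le_log hax hlo) (log_pos hx).le
  · have hK0 : K ≠ 0 := by
      rintro rfl
      linarith
    rw [← add_div, ← log_mul hK0 hax.ne']
    exact div_le_div_of_nonneg_right (log_le_log (hax.trans_le hlo) hhi) (log_pos hx).le

theorem tendsto_log_rpow_mul_div_log {g : ℝ → ℝ} {p β : ℝ} (hg : ∀ᶠ x in atTop, 0 < g x)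
    (h : Tendsto (fun x => log (g x) / log x) atTop (𝓝 β)) :
    Tendsto (fun x => log (x ^ p * g x) / log x) atTop (𝓝 (p + β)) := by
  refine (h.const_add p).congr' ?_
  filter_upwards [hg, eventually_gt_atTop 1] with x hgx hx
  rw [log_mul (rpow_pos_of_pos (by linarith) p).ne' hgx.ne', log_rpow (by linarith), add_div,
    mul_div_cancel_right₀ _ (log_pos hx).ne']

theorem exists_lintegral_Ioi_rpow_le_of_tendsto_div {μ : Measure ℝ} [IsFiniteMeasure μ]
    {p ξ : ℝ} (hp : 0 ≤ p) (hpξ : p < ξ) (hpos : ∀ x : ℝ, 0 < x → 0 < (μ (Ioi x)).toReal)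
    (hRV : Tendsto (fun t => (μ (Ioi (t * 2))).toReal / (μ (Ioi t)).toReal) atTop
      (𝓝 ((2 : ℝ) ^ (-ξ)))) :
    ∃ K : ENNReal, K ≠ ⊤ ∧ ∃ x₀ : ℝ, 0 < x₀ ∧ ∀ x, x₀ ≤ x →
      ∫⁻ u in Ioi x, ENNReal.ofReal (u ^ p) ∂μ ≤ K * (ENNReal.ofReal (x ^ p) * μ (Ioi x)) := by
  obtain ⟨r, hξr, hrp⟩ := exists_between
    (rpow_lt_rpow_of_exponent_lt one_lt_two (neg_lt_neg hpξ) : (2 : ℝ) ^ (-ξ) < 2 ^ (-p))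
  have hr0 : 0 < r := (rpow_pos_of_pos two_pos _).trans hξr
  obtain ⟨t₀, ht₀⟩ := eventually_atTop.1 (hRV.eventually_lt_const hξr)
  have hstep : ∀ t, max t₀ 1 ≤ t → μ (Ioi (t * 2)) ≤ ENNReal.ofReal r * μ (Ioi t) := by
    intro t ht
    have hratio := (div_lt_iff₀ (hpos t (by linarith [le_max_right t₀ 1]))).1
      (ht₀ t (le_of_max_le_left ht))
    rw [← ENNReal.ofReal_toReal (measure_ne_top μ (Ioi (t * 2))),
      ← ENNReal.ofReal_toReal (measure_ne_top μ (Ioi t)), ← ENNReal.ofReal_mul hr0.le]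
    exact ENNReal.ofReal_le_ofReal hratio.le
  have hr : ENNReal.ofReal (2 ^ p) * ENNReal.ofReal r < 1 := by
    rw [← ENNReal.ofReal_mul (by positivity), ENNReal.ofReal_lt_one]
    calc (2 : ℝ) ^ p * r < 2 ^ p * 2 ^ (-p) := by gcongr
      _ = 1 := by rw [← rpow_add two_pos, add_neg_cancel, rpow_zero]
  have ht₀ : 0 < max t₀ 1 := lt_max_of_lt_right one_pos
  refine ⟨_, ?_, max t₀ 1, ht₀, fun x hx => lintegral_Ioi_rpow_le hp one_lt_two ht₀ hstep hx⟩
  exact ENNReal.mul_ne_top (ENNReal.inv_ne_top.2 (tsub_pos_of_lt hr).ne') ENNReal.ofReal_ne_top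

theorem ENNReal.le_toReal_and_toReal_le_mul {a : ℝ} {m K : ENNReal} (ha : 0 ≤ a) (hK : K ≠ ⊤)
    (hlo : ENNReal.ofReal a ≤ m) (hhi : m ≤ K * ENNReal.ofReal a) :
    a ≤ m.toReal ∧ m.toReal ≤ K.toReal * a := by
  have hm : m ≠ ⊤ := ne_top_of_le_ne_top (by finiteness) hhi
  refine ⟨(ENNReal.ofReal_le_iff_le_toReal hm).1 hlo, ?_⟩
  simpa [ENNReal.toReal_mul, ha] using ENNReal.toReal_mono (by finiteness) hhi

theorem stmt_17_general (μ : Measure ℝ) [IsProbabilityMeasure μ]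
    (ξ : ℝ)
    (hpos : ∀ x : ℝ, 0 < x → 0 < (μ (Set.Ioi x)).toReal)
    (hRV : ∀ x : ℝ, 0 < x →
      Tendsto (fun t => (μ (Set.Ioi (t * x))).toReal / (μ (Set.Ioi t)).toReal)
        atTop (nhds (x ^ (-ξ)))) :
    ∀ p : ℝ, 0 ≤ p → p < ξ →
      (∃ x₀ : ℝ, 0 < x₀ ∧ ∀ x, x₀ ≤ x →
        ∫⁻ u in Set.Ioi x, ENNReal.ofReal (u ^ p) ∂μ < ⊤) ∧
      Tendsto
        (fun x => Real.log (∫⁻ u in Set.Ioi x, ENNReal.ofReal (u ^ p) ∂μ).toReal /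
          Real.log x)
        atTop (nhds (p - ξ)) := by
  intro p hp hpξ
  obtain ⟨K, hK, x₀, hx₀, hM⟩ :=
    exists_lintegral_Ioi_rpow_le_of_tendsto_div hp hpξ hpos (hRV 2 two_pos)
  refine ⟨⟨x₀, hx₀, fun x hx => (hM x hx).trans_lt (by finiteness)⟩, ?_⟩
  have hG : Tendsto (fun t => log (μ (Ioi t)).toReal / log t) atTop (𝓝 (-ξ)) :=
    tendsto_log_div_log_of_tendsto_div one_lt_two
      (fun s t hst => ENNReal.toReal_mono (measure_ne_top μ _) (measure_mono (Ioi_subset_Ioi hst)))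
      hpos (hRV 2 two_pos)
  refine tendsto_log_div_log_of_le_of_le_mul (a := fun x => x ^ p * (μ (Ioi x)).toReal)
    (K := K.toReal) ?_ ?_ (by simpa [sub_eq_add_neg] using
      tendsto_log_rpow_mul_div_log (eventually_gt_atTop 0 |>.mono hpos) hG)
  · filter_upwards [eventually_gt_atTop 0] with x hx
    exact mul_pos (rpow_pos_of_pos hx p) (hpos x hx)
  · filter_upwards [eventually_ge_atTop x₀] with x hx
    have hx0 : 0 < x := hx₀.trans_le hx
    have hofReal : ENNReal.ofReal (x ^ p * (μ (Ioi x)).toReal) =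
        ENNReal.ofReal (x ^ p) * μ (Ioi x) := by
      rw [ENNReal.ofReal_mul (by positivity), ENNReal.ofReal_toReal (measure_ne_top μ _)]
    refine ENNReal.le_toReal_and_toReal_le_mul (by positivity) hK ?_ ?_ <;> rw [hofReal]
    · exact ofReal_rpow_mul_measure_Ioi_le_lintegral hp hx0.le
    · exact hM x hx

/-- Relation (3.31) (main24): tail moments of a distribution with regularly
varying tail of index `-ξ`, for `0 ≤ p < ξ`. -/
theorem stmt_17 (μ : Measure ℝ) [IsProbabilityMeasure μ] (hsupp : μ (Set.Iio 0) = 0)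
    (ξ : ℝ) (hξ : 0 < ξ)
    (hpos : ∀ x : ℝ, 0 < x → 0 < (μ (Set.Ioi x)).toReal)
    (hRV : ∀ x : ℝ, 0 < x →
      Tendsto (fun t => (μ (Set.Ioi (t * x))).toReal / (μ (Set.Ioi t)).toReal)
        atTop (nhds (x ^ (-ξ)))) :
    ∀ p : ℝ, 0 ≤ p → p < ξ →
      (∃ x₀ : ℝ, 0 < x₀ ∧ ∀ x, x₀ ≤ x →
        ∫⁻ u in Set.Ioi x, ENNReal.ofReal (u ^ p) ∂μ < ⊤) ∧
      Tendsto
        (fun x => Real.log (∫⁻ u in Set.Ioi x, ENNReal.ofReal (u ^ p) ∂μ).toReal /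
          Real.log x)
        atTop (nhds (p - ξ)) :=
  stmt_17_general μ ξ hpos hRV
end

section
/- Let (Ω,F,P) be a probability space and Y : Ω → (0,∞) a random variable whose tail G(x) := P(Y > x) is strictly positive for all x > 0 and regularly varying at infinity with exponent −ξ, where ξ > 0. Let γ > 1, c > 0, and let r be a real number with r > ξ/(γ−1). Then lim_{h→0⁺} (log E[(1 + Y^{1−γ}/(c·h))^{−r}]) / (log h) = ξ/(γ−1). -/
/-!
With `z = c h Y^(γ-1)` the integrand is `(1 + z⁻¹)^(-r)`. It is at least `2^(-r)` on `{z ≥ 1}`,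
which is the event `{Y > s}` for `s = (c h)^(-1/(γ-1))`, and at most `z^p` for every `0 ≤ p ≤ r`.
So the expectation is bounded below by `2^(-r) P(Y > s)` and above by `c^p h^p E[Y^((γ-1)p)]`.
From `G(2t)/G(t) → 2^(-ξ)` alone, a doubling induction gives Potter bounds
`x^(-p') ≲ G(x) ≲ x^(-p)` for `p < ξ < p'`; the lower one makes the first bound of order
`h^(p'/(γ-1))`, the upper one makes `E[Y^b]` finite for `b < ξ` (layer cake formula). Letting
`p, p'` tend to `ξ` squeezes `log E / log h` to `ξ/(γ-1)`.
-/

open Filter MeasureTheory Set Real Topology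

theorem le_mul_rpow_of_doubling {f : ℝ → ℝ} {t₀ C q : ℝ} (ht₀ : 0 < t₀)
    (hbase : ∀ x ∈ Icc t₀ (2 * t₀), f x ≤ C * x ^ q)
    (hstep : ∀ x, t₀ ≤ x → f (2 * x) ≤ 2 ^ q * f x) {x : ℝ} (hx : t₀ ≤ x) :
    f x ≤ C * x ^ q := by
  suffices ∀ n : ℕ, ∀ x ∈ Icc t₀ (2 ^ n * t₀), f x ≤ C * x ^ q by
    obtain ⟨n, hn⟩ := pow_unbounded_of_one_lt (x / t₀) one_lt_two
    exact this n x ⟨hx, ((div_lt_iff₀ ht₀).1 hn).le⟩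
  intro n
  induction n with
  | zero => exact fun x hx => hbase x ⟨hx.1, by linarith [hx.2]⟩
  | succ n ih =>
    intro x ⟨hx₀, hxn⟩
    rcases le_or_gt x (2 * t₀) with hx2 | hx2
    · exact hbase x ⟨hx₀, hx2⟩
    have hhalf : x / 2 ∈ Icc t₀ (2 ^ n * t₀) :=
      ⟨by linarith, by rw [pow_succ] at hxn; linarith⟩
    calc f x = f (2 * (x / 2)) := by ring_nf
      _ ≤ 2 ^ q * f (x / 2) := hstep _ hhalf.1
      _ ≤ 2 ^ q * (C * (x / 2) ^ q) := by gcongr; exact ih _ hhalf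
      _ = C * x ^ q := by
        rw [div_rpow (by linarith) zero_le_two]
        field_simp

section Potter

variable {G : ℝ → ℝ} {ξ : ℝ}

theorem Antitone.exists_le_mul_rpow_neg (hG : Antitone G) (hpos : ∀ x, 0 < x → 0 < G x)
    (hRV : Tendsto (fun t => G (t * 2) / G t) atTop (𝓝 (2 ^ (-ξ))))
    {p : ℝ} (hp : 0 < p) (hpξ : p < ξ) :
    ∃ C, ∀ᶠ x in atTop, G x ≤ C * x ^ (-p) := by
  have hlt : (2 : ℝ) ^ (-ξ) < 2 ^ (-p) := rpow_lt_rpow_of_exponent_lt one_lt_two (by linarith)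
  obtain ⟨t₁, ht₁⟩ := eventually_atTop.1 (hRV.eventually_lt_const hlt)
  set t₀ := max t₁ 1
  have ht₀ : 0 < t₀ := lt_max_of_lt_right one_pos
  refine ⟨G t₀ * (2 * t₀) ^ p, eventually_atTop.2 ⟨t₀, fun x hx => ?_⟩⟩
  refine le_mul_rpow_of_doubling ht₀ (fun y hy => ?_) (fun y hy => ?_) hx
  · calc G y ≤ G t₀ := hG hy.1
      _ = G t₀ * (2 * t₀) ^ p * (2 * t₀) ^ (-p) := by
        rw [rpow_neg (by positivity), mul_assoc, mul_inv_cancel₀ (by positivity), mul_one]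
      _ ≤ G t₀ * (2 * t₀) ^ p * y ^ (-p) :=
        mul_le_mul_of_nonneg_left (rpow_le_rpow_of_nonpos (by linarith [hy.1]) hy.2 (by linarith))
          (mul_nonneg (hpos t₀ ht₀).le (by positivity))
  · have hy₀ : 0 < G y := hpos y (by linarith)
    have := ht₁ y (le_trans (le_max_left _ _) hy)
    rw [div_lt_iff₀ hy₀, mul_comm y] at this
    exact this.le

theorem Antitone.exists_mul_rpow_neg_le (hG : Antitone G) (hpos : ∀ x, 0 < x → 0 < G x)
    (hRV : Tendsto (fun t => G (t * 2) / G t) atTop (𝓝 (2 ^ (-ξ))))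
    {p : ℝ} (hp : 0 < p) (hpξ : ξ < p) :
    ∃ C > 0, ∀ᶠ x in atTop, C * x ^ (-p) ≤ G x := by
  have hlt : (2 : ℝ) ^ (-p) < 2 ^ (-ξ) := rpow_lt_rpow_of_exponent_lt one_lt_two (by linarith)
  obtain ⟨t₁, ht₁⟩ := eventually_atTop.1 (hRV.eventually_const_lt hlt)
  set t₀ := max t₁ 1
  have ht₀ : 0 < t₀ := lt_max_of_lt_right one_pos
  refine ⟨G (2 * t₀) * t₀ ^ p, mul_pos (hpos _ (by positivity)) (by positivity),
    eventually_atTop.2 ⟨t₀, fun x hx => ?_⟩⟩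
  have := le_mul_rpow_of_doubling (f := fun x => -G x) (C := -(G (2 * t₀) * t₀ ^ p)) (q := -p)
    ht₀ (fun y hy => ?_) (fun y hy => ?_) hx
  · linarith
  · suffices G (2 * t₀) * t₀ ^ p * y ^ (-p) ≤ G y by linarith
    calc G (2 * t₀) * t₀ ^ p * y ^ (-p) ≤ G (2 * t₀) * t₀ ^ p * t₀ ^ (-p) :=
          mul_le_mul_of_nonneg_left (rpow_le_rpow_of_nonpos ht₀ hy.1 (by linarith))
            (mul_nonneg (hpos _ (by positivity)).le (by positivity))
      _ = G (2 * t₀) := by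
        rw [rpow_neg ht₀.le, mul_assoc, mul_inv_cancel₀ (by positivity), mul_one]
      _ ≤ G y := hG hy.2
  · have hy₀ : 0 < G y := hpos y (by linarith)
    have := ht₁ y (le_trans (le_max_left _ _) hy)
    rw [lt_div_iff₀ hy₀, mul_comm y] at this
    linarith

end Potter

theorem tendsto_log_mul_rpow_div_log_s19 {C : ℝ} (hC : 0 < C) (p : ℝ) :
    Tendsto (fun h => log (C * h ^ p) / log h) (𝓝[>] 0) (𝓝 p) := by
  have hlog : Tendsto (fun h => log C / log h) (𝓝[>] 0) (𝓝 0) :=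
    tendsto_const_nhds.div_atBot tendsto_log_nhdsGT_zero
  have hne : ∀ᶠ h in 𝓝[>] (0 : ℝ), log h ≠ 0 := by
    filter_upwards [Ioo_mem_nhdsGT one_pos] with h hh
    exact (log_neg hh.1 hh.2).ne
  refine (by simpa using hlog.add_const p : Tendsto _ _ (𝓝 p)).congr' ?_
  filter_upwards [self_mem_nhdsWithin, hne] with h hh hlogh
  rw [log_mul hC.ne' (rpow_pos_of_pos hh p).ne', log_rpow hh, add_div,
    mul_div_cancel_right₀ _ hlogh]

theorem log_div_log_le_log_div_log {a b h : ℝ} (ha : 0 < a) (hab : a ≤ b) (hh : h ∈ Ioo 0 1) :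
    log b / log h ≤ log a / log h :=
  div_le_div_of_nonpos_of_le (log_neg hh.1 hh.2).le (log_le_log ha hab)

theorem tendsto_log_div_log_of_rpow_bounds_s19 {f : ℝ → ℝ} {β : ℝ} (hβ : 0 < β)
    (upper : ∀ p ∈ Ioo 0 β, ∃ C, ∀ᶠ h in 𝓝[>] 0, f h ≤ C * h ^ p)
    (lower : ∀ p, β < p → ∃ C > 0, ∀ᶠ h in 𝓝[>] 0, C * h ^ p ≤ f h) :
    Tendsto (fun h => log (f h) / log h) (𝓝[>] 0) (𝓝 β) := by
  have hunit : ∀ᶠ h in 𝓝[>] (0 : ℝ), h ∈ Ioo 0 1 := Ioo_mem_nhdsGT one_pos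
  refine tendsto_order.2 ⟨fun a ha => ?_, fun a ha => ?_⟩
  · obtain ⟨p, hap, hpβ⟩ := exists_between (max_lt ha hβ)
    obtain ⟨C, hC⟩ := upper p ⟨(le_max_right _ _).trans_lt hap, hpβ⟩
    obtain ⟨C₀, hC₀, hpos⟩ := lower (β + 1) (by linarith)
    have hC' : 0 < max C 1 := lt_max_of_lt_right one_pos
    filter_upwards [hunit, hC, hpos, (tendsto_log_mul_rpow_div_log_s19 hC' p).eventually_const_lt
      ((le_max_left _ _).trans_lt hap)] with h hh hfC hf₀ hlim
    have hf : 0 < f h := (mul_pos hC₀ (rpow_pos_of_pos hh.1 _)).trans_le hf₀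
    refine hlim.trans_le (log_div_log_le_log_div_log hf (hfC.trans ?_) hh)
    exact mul_le_mul_of_nonneg_right (le_max_left _ _) (rpow_nonneg hh.1.le _)
  · obtain ⟨p, hβp, hpa⟩ := exists_between ha
    obtain ⟨C, hC, hf⟩ := lower p hβp
    filter_upwards [hunit, hf, (tendsto_log_mul_rpow_div_log_s19 hC p).eventually_lt_const hpa]
      with h hh hfC hlim
    exact (log_div_log_le_log_div_log (mul_pos hC (rpow_pos_of_pos hh.1 _)) hfC hh).trans_lt hlim

theorem one_add_inv_rpow_neg_le_rpow {z r q : ℝ} (hz : 0 < z) (hq : 0 ≤ q) (hqr : q ≤ r) :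
    (1 + z⁻¹) ^ (-r) ≤ z ^ q := by
  rcases le_total 1 z with hz1 | hz1
  · calc (1 + z⁻¹) ^ (-r) ≤ 1 :=
          rpow_le_one_of_one_le_of_nonpos (by linarith [inv_pos.2 hz]) (by linarith)
      _ ≤ z ^ q := one_le_rpow hz1 hq
  · calc (1 + z⁻¹) ^ (-r) ≤ (z⁻¹) ^ (-r) :=
          rpow_le_rpow_of_nonpos (inv_pos.2 hz) (by linarith) (by linarith)
      _ = z ^ r := by rw [inv_rpow hz.le, rpow_neg hz.le, inv_inv]
      _ ≤ z ^ q := rpow_le_rpow_of_exponent_ge hz hz1 hqr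

theorem two_rpow_neg_le_one_add_inv_rpow_neg {z r : ℝ} (hz : 1 ≤ z) (hr : 0 ≤ r) :
    (2 : ℝ) ^ (-r) ≤ (1 + z⁻¹) ^ (-r) :=
  rpow_le_rpow_of_nonpos (by positivity) (by linarith [inv_le_one_of_one_le₀ hz]) (by linarith)

theorem integrable_rpow_of_tail_le {Ω : Type*} [MeasurableSpace Ω] {P : Measure Ω}
    [IsFiniteMeasure P] {Y : Ω → ℝ} (hY : Measurable Y) (hY₀ : ∀ ω, 0 ≤ Y ω) {b p C : ℝ}
    (hb : 0 < b) (hbp : b < p) (htail : ∀ᶠ t in atTop, (P {ω | t < Y ω}).toReal ≤ C * t ^ (-p)) :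
    Integrable (fun ω => Y ω ^ b) P := by
  obtain ⟨t₁, ht₁⟩ := eventually_atTop.1 htail
  set t₀ := max t₁ 1
  have ht₀ : 0 < t₀ := lt_max_of_lt_right one_pos
  refine ⟨(hY.pow_const b).aestronglyMeasurable, ?_⟩
  rw [hasFiniteIntegral_iff_ofReal (ae_of_all _ fun ω => rpow_nonneg (hY₀ ω) b),
    lintegral_rpow_eq_lintegral_meas_lt_mul P (ae_of_all _ hY₀) hY.aemeasurable hb,
    ← Ioc_union_Ioi_eq_Ioi ht₀.le]
  refine ENNReal.mul_lt_top ENNReal.ofReal_lt_top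
    ((lintegral_union_le _ _ _).trans_lt (ENNReal.add_lt_top.2 ⟨?_, ?_⟩))
  · have hint : IntegrableOn (fun t : ℝ => t ^ (b - 1)) (Ioc 0 t₀) :=
      (intervalIntegrable_iff_integrableOn_Ioc_of_le ht₀.le).1
        (intervalIntegral.intervalIntegrable_rpow' (by linarith))
    calc ∫⁻ t in Ioc 0 t₀, P {ω | t < Y ω} * ENNReal.ofReal (t ^ (b - 1))
        ≤ ∫⁻ t in Ioc 0 t₀, P univ * ENNReal.ofReal (t ^ (b - 1)) :=
          lintegral_mono fun t => mul_le_mul_left (measure_mono (subset_univ _)) _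
      _ < ⊤ := by
        rw [lintegral_const_mul _ (by fun_prop)]
        exact ENNReal.mul_lt_top (measure_lt_top P univ) hint.lintegral_lt_top
  · have hint : IntegrableOn (fun t : ℝ => C * t ^ (b - 1 - p)) (Ioi t₀) :=
      (integrableOn_Ioi_rpow_of_lt (by linarith) ht₀).const_mul C
    refine lt_of_le_of_lt (setLIntegral_mono (by fun_prop) fun t hts => ?_) hint.lintegral_lt_top
    have ht : 0 < t := ht₀.trans hts
    rw [← ofReal_measureReal, measureReal_def, ← ENNReal.ofReal_mul' (rpow_nonneg ht.le _)]
    refine ENNReal.ofReal_le_ofReal ?_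
    calc (P {ω | t < Y ω}).toReal * t ^ (b - 1) ≤ C * t ^ (-p) * t ^ (b - 1) :=
          mul_le_mul_of_nonneg_right (ht₁ t ((le_max_left _ _).trans hts.le))
            (rpow_nonneg ht.le _)
      _ = C * t ^ (b - 1 - p) := by
        rw [mul_assoc, ← rpow_add ht]; ring_nf

theorem rpow_one_sub_div_eq_inv {y γ a : ℝ} (hy : 0 < y) :
    y ^ (1 - γ) / a = (a * y ^ (γ - 1))⁻¹ := by
  rw [mul_inv, ← rpow_neg hy.le, neg_sub, div_eq_mul_inv, mul_comm]

theorem rpow_neg_inv_rpow_neg_mul {x a : ℝ} (hx : 0 ≤ x) (ha : a ≠ 0) (p : ℝ) :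
    (x ^ (-a⁻¹)) ^ (-(a * p)) = x ^ p := by
  rw [← rpow_mul hx]
  congr 1
  field_simp

section Integrand

variable {Ω : Type*} [MeasurableSpace Ω] {P : Measure Ω} {Y : Ω → ℝ}
  {γ c r h : ℝ}

theorem integrable_one_add_rpow_div_rpow_neg [IsFiniteMeasure P] (hY : Measurable Y)
    (hY₀ : ∀ ω, 0 < Y ω) (hch : 0 < c * h) (hr : 0 ≤ r) :
    Integrable (fun ω => (1 + Y ω ^ (1 - γ) / (c * h)) ^ (-r)) P := by
  refine (integrable_const (1 : ℝ)).mono'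
    ((measurable_const.add ((hY.pow_const _).div_const _)).pow_const _).aestronglyMeasurable
    (ae_of_all _ fun ω => ?_)
  have : 0 ≤ Y ω ^ (1 - γ) / (c * h) := div_nonneg (rpow_nonneg (hY₀ ω).le _) hch.le
  rw [norm_of_nonneg (rpow_nonneg (by linarith) _)]
  exact rpow_le_one_of_one_le_of_nonpos (by linarith) (by linarith)

theorem integral_one_add_rpow_div_rpow_neg_le (hY₀ : ∀ ω, 0 < Y ω) (hc : 0 < c) (hh : 0 < h)
    {p : ℝ} (hp : 0 ≤ p) (hpr : p ≤ r) (hint : Integrable (fun ω => Y ω ^ ((γ - 1) * p)) P) :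
    ∫ ω, (1 + Y ω ^ (1 - γ) / (c * h)) ^ (-r) ∂P ≤
      c ^ p * (∫ ω, Y ω ^ ((γ - 1) * p) ∂P) * h ^ p := by
  have hch : 0 < c * h := mul_pos hc hh
  calc ∫ ω, (1 + Y ω ^ (1 - γ) / (c * h)) ^ (-r) ∂P
      ≤ ∫ ω, (c * h) ^ p * Y ω ^ ((γ - 1) * p) ∂P := by
        refine integral_mono_of_nonneg (ae_of_all _ fun ω => ?_) (hint.const_mul _)
          (ae_of_all _ fun ω => ?_)
        · have hY := hY₀ ω
          dsimp only [Pi.zero_apply]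
          rw [rpow_one_sub_div_eq_inv hY]
          positivity
        have hY := hY₀ ω
        dsimp only
        rw [rpow_one_sub_div_eq_inv hY, rpow_mul hY.le, ← mul_rpow hch.le (by positivity)]
        exact one_add_inv_rpow_neg_le_rpow (by positivity) hp hpr
    _ = c ^ p * (∫ ω, Y ω ^ ((γ - 1) * p) ∂P) * h ^ p := by
        rw [integral_const_mul, mul_rpow hc.le hh.le]; ring

theorem two_rpow_neg_mul_tail_le_integral [IsFiniteMeasure P] (hY : Measurable Y)
    (hY₀ : ∀ ω, 0 < Y ω) (hγ : 1 < γ) (hch : 0 < c * h) (hr : 0 ≤ r) :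
    2 ^ (-r) * (P {ω | (c * h) ^ (-(γ - 1)⁻¹) < Y ω}).toReal ≤
      ∫ ω, (1 + Y ω ^ (1 - γ) / (c * h)) ^ (-r) ∂P := by
  set s := (c * h) ^ (-(γ - 1)⁻¹)
  have hs : MeasurableSet {ω | s < Y ω} := measurableSet_lt measurable_const hY
  have hsγ : s ^ (γ - 1) = (c * h)⁻¹ := by
    rw [← rpow_mul hch.le, neg_mul, inv_mul_cancel₀ (sub_pos.2 hγ).ne', rpow_neg_one]
  calc 2 ^ (-r) * (P {ω | s < Y ω}).toReal
      = ∫ ω, {ω | s < Y ω}.indicator (fun _ => (2 : ℝ) ^ (-r)) ω ∂P := by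
        rw [integral_indicator_const _ hs, smul_eq_mul, measureReal_def, mul_comm]
    _ ≤ ∫ ω, (1 + Y ω ^ (1 - γ) / (c * h)) ^ (-r) ∂P := by
        refine integral_mono ((integrable_const _).indicator hs)
          (integrable_one_add_rpow_div_rpow_neg hY hY₀ hch hr) fun ω => ?_
        have hYω := hY₀ ω
        rw [rpow_one_sub_div_eq_inv hYω]
        refine indicator_apply_le' (fun hω => ?_) fun _ => by positivity
        refine two_rpow_neg_le_one_add_inv_rpow_neg ?_ hr
        calc 1 = c * h * s ^ (γ - 1) := by rw [hsγ, mul_inv_cancel₀ hch.ne']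
          _ ≤ c * h * Y ω ^ (γ - 1) := by
            gcongr
            exact hω.le

theorem eventually_mul_rpow_le_integral [IsFiniteMeasure P] (hY : Measurable Y)
    (hY₀ : ∀ ω, 0 < Y ω) (hγ : 1 < γ) (hc : 0 < c) (hr : 0 ≤ r) {C p : ℝ}
    (htail : ∀ᶠ x in atTop, C * x ^ (-((γ - 1) * p)) ≤ (P {ω | x < Y ω}).toReal) :
    ∀ᶠ h in 𝓝[>] 0, 2 ^ (-r) * C * c ^ p * h ^ p ≤
      ∫ ω, (1 + Y ω ^ (1 - γ) / (c * h)) ^ (-r) ∂P := by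
  have hγ₁ : 0 < γ - 1 := sub_pos.2 hγ
  have hs : Tendsto (fun h => (c * h) ^ (-(γ - 1)⁻¹)) (𝓝[>] 0) atTop :=
    (tendsto_rpow_neg_nhdsGT_zero (neg_neg_of_pos (inv_pos.2 hγ₁))).comp
      (tendsto_iff_comap.2 (comap_mulLeft_nhdsGT_zero hc).ge)
  filter_upwards [self_mem_nhdsWithin, hs.eventually htail] with h hh hCh
  have hch : 0 < c * h := mul_pos hc hh
  calc 2 ^ (-r) * C * c ^ p * h ^ p
      = 2 ^ (-r) * (C * ((c * h) ^ (-(γ - 1)⁻¹)) ^ (-((γ - 1) * p))) := by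
        rw [rpow_neg_inv_rpow_neg_mul hch.le hγ₁.ne', mul_rpow hc.le hh.le]; ring
    _ ≤ 2 ^ (-r) * (P {ω | (c * h) ^ (-(γ - 1)⁻¹) < Y ω}).toReal := by gcongr
    _ ≤ _ := two_rpow_neg_mul_tail_le_integral hY hY₀ hγ hch hr

end Integrand

/-- Scaling relation (3.16) (main9) of the paper. -/
theorem stmt_19 {Ω : Type*} [MeasurableSpace Ω] (P : Measure Ω) [IsProbabilityMeasure P]
    (Y : Ω → ℝ) (hY : Measurable Y) (hYpos : ∀ ω, 0 < Y ω)
    (ξ : ℝ) (hξ : 0 < ξ)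
    (hpos : ∀ x : ℝ, 0 < x → 0 < (P {ω | x < Y ω}).toReal)
    (hRV : ∀ x : ℝ, 0 < x →
      Tendsto (fun t => (P {ω | t * x < Y ω}).toReal / (P {ω | t < Y ω}).toReal)
        atTop (nhds (x ^ (-ξ))))
    (γ c r : ℝ) (hγ : 1 < γ) (hc : 0 < c) (hr : ξ / (γ - 1) < r) :
    Tendsto
      (fun h => Real.log (∫ ω, (1 + Y ω ^ (1 - γ) / (c * h)) ^ (-r) ∂P) / Real.log h)
      (nhdsWithin 0 (Set.Ioi 0)) (nhds (ξ / (γ - 1))) := by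
  have hγ₁ : 0 < γ - 1 := sub_pos.2 hγ
  have hr₀ : 0 < r := (div_pos hξ hγ₁).trans hr
  have hG : Antitone fun x : ℝ => (P {ω | x < Y ω}).toReal := fun a b hab =>
    ENNReal.toReal_mono (measure_ne_top _ _) (measure_mono fun ω hω => hab.trans_lt hω)
  have hRV₂ := hRV 2 two_pos
  refine tendsto_log_div_log_of_rpow_bounds_s19 (div_pos hξ hγ₁) (fun p hp => ?_) (fun p hp => ?_)
  · have hpξ : (γ - 1) * p < ξ := by rw [mul_comm, ← lt_div_iff₀ hγ₁]; exact hp.2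
    have hp₀ : 0 < (γ - 1) * p := mul_pos hγ₁ hp.1
    obtain ⟨C, hC⟩ := hG.exists_le_mul_rpow_neg hpos hRV₂ (p := ((γ - 1) * p + ξ) / 2)
      (by linarith) (by linarith)
    have hint := integrable_rpow_of_tail_le hY (fun ω => (hYpos ω).le) hp₀ (by linarith) hC
    exact ⟨_, eventually_mem_nhdsWithin.mono fun h hh =>
      integral_one_add_rpow_div_rpow_neg_le hYpos hc hh hp.1.le (hp.2.trans hr).le hint⟩
  · have hpξ : ξ < (γ - 1) * p := by rw [mul_comm, ← div_lt_iff₀ hγ₁]; exact hp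
    obtain ⟨C, hC, hCG⟩ := hG.exists_mul_rpow_neg_le hpos hRV₂ (by linarith) hpξ
    exact ⟨_, by positivity, eventually_mul_rpow_le_integral hY hYpos hγ hc hr₀.le hCG⟩
end
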